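/- arXiv:2502.01284 — 7 statements merged into one kernel-verified Lean document; each statement's English description precedes it below -/
import Mathlib

section
/- Let (Ω, F, P) be a probability space with a filtration (F_n)_{n∈ℕ}. Let f : ℝ → ℝ be continuously differentiable with Lipschitz derivative f′, such that f′ has a unique zero θ* (the unique minimizer of f), and suppose there exist L > 0 and r > 0 with f′(θ) > r for all θ > L and f′(θ) < −r for all θ < −L. Let (a_n) and (δ_n) be positive sequences such that (a_n), (δ_n) and (a_n/δ_n) are nonincreasing, δ_n → 0, ∑_n a_n = ∞, and ∑_n a_n²/δ_n² < ∞. Let (θ_n), (b_n), (η_n), (Δ_n) be real-valued random sequences such that θ_n and b_n are F_n-measurable, η_n and Δ_n are F_{n+1}-measurable, and θ_{n+1} = θ_n − a_n (f′(θ_n) + b_n + η_n + Δ_n) for all n. Assume: (i) there is a constant C₀ with |b_n| ≤ C₀ δ_n² almost surely for all n; (ii) each η_n is square-integrable with E[η_n | F_n] = 0 and δ_n² E[η_n² | F_n] ≤ σ² almost surely for some constant σ; (iii) almost surely, Δ_n = 0 for all sufficiently large n. Then θ_n converges to θ* almost surely. -/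
/-!
The weighted noise sums `M n = ∑_{k<n} a_k η_k` form a martingale with orthogonal increments, so
`E[M_n²] ≤ σ² ∑ a_k² / δ_k²` stays bounded and `M` converges almost surely. For such an `ω`,
subtracting the tail `lim M - M_n` from `θ_n` leaves a deterministic recursion
`y_{n+1} = y_n - a_n (f'(y_n + D_n) + c_n)` with vanishing perturbations `D_n, c_n`.
Away from `θ*` the drift `f'` is bounded away from zero with the right sign, so `∑ a_n = ∞` drives
`y` into any neighbourhood of `θ*`; once `a_n K ≤ 1` (`K` a Lipschitz constant of `f'`) a step
cannot overshoot, so `y` stays there.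
-/

open MeasureTheory Filter Topology Finset

section PerturbedDescent

variable {g : ℝ → ℝ} {xs L r : ℝ}

theorem pos_of_lt_of_unique_zero (hg : Continuous g) (hzero : ∀ x, g x = 0 ↔ x = xs)
    (hfar : ∀ x, L < x → 0 < g x) {x : ℝ} (hx : xs < x) : 0 < g x := by
  by_contra! hneg
  obtain ⟨z, hz, hgz⟩ : ∃ z ∈ Set.Icc x (max x L + 1), g z = 0 :=
    intermediate_value_Icc (by linarith [le_max_left x L]) hg.continuousOn
      ⟨hneg, (hfar _ (by linarith [le_max_right x L])).le⟩
  linarith [hz.1, (hzero z).1 hgz]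

theorem exists_pos_forall_le_of_le (hg : Continuous g) (hzero : ∀ x, g x = 0 ↔ x = xs)
    (hr : 0 < r) (hfar : ∀ x, L < x → r < g x) {t : ℝ} (ht : xs < t) :
    ∃ m > 0, ∀ x, t ≤ x → m ≤ g x := by
  obtain ⟨z, hz, hmin⟩ := isCompact_Icc.exists_isMinOn
    (Set.nonempty_Icc.2 (le_max_left t L)) hg.continuousOn
  have hgz : 0 < g z := pos_of_lt_of_unique_zero hg hzero (fun x hx => hr.trans (hfar x hx))
    (ht.trans_le hz.1)
  refine ⟨min (g z) r, lt_min hgz hr, fun x hx => ?_⟩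
  rcases le_or_gt x (max t L) with hxR | hxR
  · exact (min_le_left _ _).trans (hmin ⟨hx, hxR⟩)
  · exact (min_le_right _ _).trans (hfar x ((le_max_right t L).trans_lt hxR)).le

theorem descent_step_le_max {K : NNReal} (hLip : LipschitzWith K g) (hg0 : g xs = 0)
    (hg_nonneg : ∀ x, xs ≤ x → 0 ≤ g x) {a : ℝ} (ha : 0 ≤ a) (haK : a * K ≤ 1) (y d c : ℝ) :
    y - a * (g (y + d) + c) ≤ max y (xs - d) + a * |c| := by
  have hc : -(a * c) ≤ a * |c| := by nlinarith [neg_abs_le c]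
  rcases le_or_gt xs (y + d) with hx | hx
  · nlinarith [le_max_left y (xs - d), mul_nonneg ha (hg_nonneg _ hx)]
  · -- the Lipschitz bound keeps a step from overshooting `xs` once `a * K ≤ 1`
    have hLx : -g (y + d) ≤ K * (xs - (y + d)) := by
      have := hLip.dist_le_mul xs (y + d)
      rw [Real.dist_eq, Real.dist_eq, hg0, abs_of_pos (sub_pos.2 hx)] at this
      linarith [le_abs_self (0 - g (y + d))]
    have hover : a * -g (y + d) ≤ xs - (y + d) :=
      calc a * -g (y + d) ≤ a * (K * (xs - (y + d))) := mul_le_mul_of_nonneg_left hLx ha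
        _ = (a * K) * (xs - (y + d)) := by ring
        _ ≤ 1 * (xs - (y + d)) := mul_le_mul_of_nonneg_right haK (by linarith)
        _ = xs - (y + d) := one_mul _
    linarith [le_max_right y (xs - d)]

theorem exists_lt_of_descent {a y : ℕ → ℝ} {m h : ℝ} (hm : 0 < m) (ha : ∀ n, 0 ≤ a n)
    (ha_div : ¬ Summable a) (N : ℕ) (hdesc : ∀ n ≥ N, h ≤ y n → y (n + 1) ≤ y n - m * a n) :
    ∃ n ≥ N, y n < h := by
  by_contra! hge
  have hpot : ∀ n ≥ N, y n + m * ∑ k ∈ range n, a k ≤ y N + m * ∑ k ∈ range N, a k := by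
    intro n hn
    induction n, hn using Nat.le_induction with
    | base => exact le_rfl
    | succ n hn ih => rw [sum_range_succ]; linarith [hdesc n hn (hge n hn)]
  have hS := (not_summable_iff_tendsto_nat_atTop_of_nonneg ha).1 ha_div
  obtain ⟨n, hbig, hn⟩ := ((hS.eventually_gt_atTop
    ((y N + m * ∑ k ∈ range N, a k - h) / m)).and (eventually_ge_atTop N)).exists
  rw [div_lt_iff₀ hm] at hbig
  linarith [hpot n hn, hge n hn]

variable {K : NNReal} {a D c y : ℕ → ℝ}

theorem eventually_le_add_of_perturbed_descent (hLip : LipschitzWith K g)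
    (hzero : ∀ x, g x = 0 ↔ x = xs) (hr : 0 < r) (hfar : ∀ x, L < x → r < g x)
    (ha_pos : ∀ n, 0 < a n) (ha0 : Tendsto a atTop (𝓝 0)) (ha_div : ¬ Summable a)
    (hD : Tendsto D atTop (𝓝 0)) (hc : Tendsto c atTop (𝓝 0))
    (hrec : ∀ n, y (n + 1) = y n - a n * (g (y n + D n) + c n)) {ε : ℝ} (hε : 0 < ε) :
    ∀ᶠ n in atTop, y n ≤ xs + ε := by
  obtain ⟨m, hm, hgm⟩ :=
    exists_pos_forall_le_of_le hLip.continuous hzero hr hfar (by linarith : xs < xs + ε / 4)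
  have hg_nonneg : ∀ x, xs ≤ x → 0 ≤ g x := fun x hx => hx.eq_or_lt.elim
    (fun h => ((hzero x).2 h.symm).ge)
    (fun h => (pos_of_lt_of_unique_zero hLip.continuous hzero
      (fun x hx => hr.trans (hfar x hx)) h).le)
  have hD' : Tendsto (fun n => |D n|) atTop (𝓝 0) := by simpa using hD.abs
  have hc' : Tendsto (fun n => |c n|) atTop (𝓝 0) := by simpa using hc.abs
  have haK : Tendsto (fun n => a n * K) atTop (𝓝 0) := by simpa using ha0.mul_const (K : ℝ)
  have hac : Tendsto (fun n => a n * |c n|) atTop (𝓝 0) := by simpa using ha0.mul hc'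
  have hsmall : ∀ᶠ n in atTop, |D n| < ε / 4 ∧ |c n| < m / 2 ∧ a n * K ≤ 1 ∧
      a n * |c n| < ε / 4 :=
    (hD'.eventually_lt_const (by positivity)).and <| (hc'.eventually_lt_const (by positivity)).and
      <| (haK.eventually_le_const zero_lt_one).and (hac.eventually_lt_const (by positivity))
  obtain ⟨N, hN⟩ := eventually_atTop.1 hsmall
  have hdesc : ∀ n ≥ N, xs + ε / 2 ≤ y n → y (n + 1) ≤ y n - m / 2 * a n := by
    intro n hn hy
    obtain ⟨hDn, hcn, -, -⟩ := hN n hn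
    have hgn := hgm (y n + D n) (by linarith [neg_abs_le (D n)])
    have : m / 2 ≤ g (y n + D n) + c n := by linarith [neg_abs_le (c n)]
    rw [hrec n]
    nlinarith [ha_pos n]
  obtain ⟨n₀, hn₀, hy₀⟩ :=
    exists_lt_of_descent (half_pos hm) (fun n => (ha_pos n).le) ha_div N hdesc
  refine eventually_atTop.2 ⟨n₀, fun n hn => ?_⟩
  induction n, hn using Nat.le_induction with
  | base => linarith
  | succ n hn ih =>
    obtain ⟨hDn, -, haK, hac⟩ := hN n (hn₀.trans hn)
    rcases le_or_gt (xs + ε / 2) (y n) with hy | hy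
    · nlinarith [hdesc n (hn₀.trans hn) hy, ha_pos n]
    · have hmax : max (y n) (xs - D n) ≤ xs + ε / 2 :=
        max_le hy.le (by linarith [neg_abs_le (D n)])
      rw [hrec n]
      linarith [descent_step_le_max hLip ((hzero xs).2 rfl) hg_nonneg (ha_pos n).le haK
        (y n) (D n) (c n)]

theorem tendsto_of_perturbed_descent (hLip : LipschitzWith K g)
    (hzero : ∀ x, g x = 0 ↔ x = xs) (hr : 0 < r)
    (hfar_pos : ∀ x, L < x → r < g x) (hfar_neg : ∀ x, x < -L → g x < -r)
    (ha_pos : ∀ n, 0 < a n) (ha0 : Tendsto a atTop (𝓝 0)) (ha_div : ¬ Summable a)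
    (hD : Tendsto D atTop (𝓝 0)) (hc : Tendsto c atTop (𝓝 0))
    (hrec : ∀ n, y (n + 1) = y n - a n * (g (y n + D n) + c n)) :
    Tendsto y atTop (𝓝 xs) := by
  have hup : ∀ ε > 0, ∀ᶠ n in atTop, y n ≤ xs + ε := fun ε hε =>
    eventually_le_add_of_perturbed_descent hLip hzero hr hfar_pos ha_pos ha0 ha_div hD hc hrec hε
  -- the reflection `x ↦ -g (-x)` turns the lower bound into an upper one
  have hLip_refl : LipschitzWith K fun x => -g (-x) := by
    have : LipschitzWith K fun x => g (-x) := by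
      simpa [Function.comp_def] using hLip.comp LipschitzWith.id.neg
    exact this.neg
  have hlow : ∀ ε > 0, ∀ᶠ n in atTop, -y n ≤ -xs + ε := fun ε hε =>
    eventually_le_add_of_perturbed_descent (xs := -xs) (L := L) (D := fun n => -D n)
      (c := fun n => -c n) (y := fun n => -y n) hLip_refl
      (fun x => by simp [hzero, neg_eq_iff_eq_neg]) hr
      (fun x hx => by linarith [hfar_neg (-x) (by linarith)]) ha_pos ha0 ha_div
      (by simpa using hD.neg) (by simpa using hc.neg)
      (fun n => by simp only [hrec n, neg_add_rev, neg_neg]; ring_nf) hε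
  refine tendsto_order.2 ⟨fun b hb => ?_, fun b hb => ?_⟩
  · filter_upwards [hlow ((xs - b) / 2) (by linarith)] with n hn
    linarith
  · filter_upwards [hup ((b - xs) / 2) (by linarith)] with n hn
    linarith

theorem tendsto_of_perturbed_descent_of_tendsto_sum {e θ : ℕ → ℝ} {ℓ : ℝ}
    (hLip : LipschitzWith K g) (hzero : ∀ x, g x = 0 ↔ x = xs) (hr : 0 < r)
    (hfar_pos : ∀ x, L < x → r < g x) (hfar_neg : ∀ x, x < -L → g x < -r)
    (ha_pos : ∀ n, 0 < a n) (ha0 : Tendsto a atTop (𝓝 0)) (ha_div : ¬ Summable a)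
    (hc : Tendsto c atTop (𝓝 0))
    (he : Tendsto (fun n => ∑ k ∈ range n, a k * e k) atTop (𝓝 ℓ))
    (hrec : ∀ n, θ (n + 1) = θ n - a n * (g (θ n) + c n + e n)) :
    Tendsto θ atTop (𝓝 xs) := by
  set D : ℕ → ℝ := fun n => ℓ - ∑ k ∈ range n, a k * e k with hD_def
  have hD : Tendsto D atTop (𝓝 0) := by simpa using he.const_sub ℓ
  have hy := tendsto_of_perturbed_descent (y := fun n => θ n - D n) hLip hzero hr hfar_pos
    hfar_neg ha_pos ha0 ha_div hD hc
    (fun n => by simp only [sub_add_cancel, hD_def, sum_range_succ, hrec n]; ring)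
  simpa using hy.add hD

end PerturbedDescent

theorem tendsto_zero_of_summable_sq_div_sq {a δ : ℕ → ℝ} (hδ_pos : ∀ n, 0 < δ n)
    (hδ : Tendsto δ atTop (𝓝 0)) (hs : Summable fun n => a n ^ 2 / δ n ^ 2) :
    Tendsto a atTop (𝓝 0) := by
  refine squeeze_zero_norm' ?_ hδ
  filter_upwards [hs.tendsto_atTop_zero.eventually_lt_const zero_lt_one] with n hn
  rw [div_lt_one (pow_pos (hδ_pos n) 2)] at hn
  exact abs_le_of_sq_le_sq hn.le (hδ_pos n).le

section MartingaleDifferences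

variable {Ω : Type*} {m0 : MeasurableSpace Ω} {P : Measure Ω}

theorem integral_le_of_condExp_le [IsProbabilityMeasure P] {m : MeasurableSpace Ω}
    (hm : m ≤ m0) {X : Ω → ℝ} {C : ℝ} (h : ∀ᵐ ω ∂P, P[X|m] ω ≤ C) : ∫ ω, X ω ∂P ≤ C := by
  rw [← integral_condExp hm]
  calc ∫ ω, P[X|m] ω ∂P ≤ ∫ _, C ∂P := integral_mono_ae integrable_condExp (integrable_const C) h
    _ = C := by simp

theorem integral_sq_add_of_condExp_eq_zero [IsFiniteMeasure P] {m : MeasurableSpace Ω}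
    (hm : m ≤ m0) {X Y : Ω → ℝ} (hXm : StronglyMeasurable[m] X) (hX : MemLp X 2 P)
    (hY : MemLp Y 2 P) (hY0 : P[Y|m] =ᵐ[P] 0) :
    ∫ ω, (X ω + Y ω) ^ 2 ∂P = ∫ ω, X ω ^ 2 ∂P + ∫ ω, Y ω ^ 2 ∂P := by
  have hXY : Integrable (X * Y) P := hX.integrable_mul hY
  have horth : ∫ ω, X ω * Y ω ∂P = 0 := by
    have hXY0 : P[X * Y|m] =ᵐ[P] 0 :=
      (condExp_mul_of_stronglyMeasurable_left hXm hXY (hY.integrable one_le_two)).trans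
        (by filter_upwards [hY0] with ω hω; simp [hω])
    rw [show (fun ω => X ω * Y ω) = X * Y from rfl, ← integral_condExp hm,
      integral_congr_ae hXY0]
    simp
  have hXY2 : Integrable (fun ω => 2 * X ω * Y ω) P := by
    simpa [mul_assoc] using hXY.const_mul 2
  simp_rw [add_sq]
  rw [integral_add (f := fun ω => X ω ^ 2 + 2 * X ω * Y ω) (hX.integrable_sq.add hXY2)
      hY.integrable_sq,
    integral_add hX.integrable_sq hXY2]
  simp [mul_assoc, integral_const_mul, horth]

variable {F : Filtration ℕ m0} {ξ : ℕ → Ω → ℝ}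

theorem martingale_partialSum [IsFiniteMeasure P]
    (hξm : ∀ n, StronglyMeasurable[F (n + 1)] (ξ n)) (hξ : ∀ n, Integrable (ξ n) P)
    (hξ0 : ∀ n, P[ξ n|F n] =ᵐ[P] 0) : Martingale (fun n ω => ∑ k ∈ range n, ξ k ω) F P := by
  refine martingale_of_condExp_sub_eq_zero_nat (fun n => ?_) (fun n => ?_) (fun n => ?_)
  · exact Finset.stronglyMeasurable_fun_sum _ fun k hk =>
      (hξm k).mono (F.mono (Finset.mem_range.1 hk))
  · exact integrable_finsetSum _ fun k _ => hξ k
  · have hinc : (fun ω => ∑ k ∈ range (n + 1), ξ k ω) - (fun ω => ∑ k ∈ range n, ξ k ω) = ξ n := by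
      ext ω
      simp [sum_range_succ]
    rw [hinc]
    exact hξ0 n

theorem integral_sq_partialSum [IsFiniteMeasure P]
    (hξm : ∀ n, StronglyMeasurable[F (n + 1)] (ξ n)) (hξ : ∀ n, MemLp (ξ n) 2 P)
    (hξ0 : ∀ n, P[ξ n|F n] =ᵐ[P] 0) (n : ℕ) :
    ∫ ω, (∑ k ∈ range n, ξ k ω) ^ 2 ∂P = ∑ k ∈ range n, ∫ ω, ξ k ω ^ 2 ∂P := by
  induction n with
  | zero => simp
  | succ n ih =>
    simp only [sum_range_succ]
    rw [integral_sq_add_of_condExp_eq_zero (F.le n)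
      ((martingale_partialSum hξm (fun k => (hξ k).integrable one_le_two) hξ0).stronglyAdapted n)
      (memLp_finsetSum _ fun k _ => hξ k) (hξ n) (hξ0 n), ih]

theorem MeasureTheory.Martingale.exists_ae_tendsto_of_integral_sq_le [IsProbabilityMeasure P]
    {M : ℕ → Ω → ℝ} {C : ℝ} (hM : Martingale M F P) (hM2 : ∀ n, MemLp (M n) 2 P)
    (hC : ∀ n, ∫ ω, M n ω ^ 2 ∂P ≤ C) :
    ∀ᵐ ω ∂P, ∃ ℓ, Tendsto (fun n => M n ω) atTop (𝓝 ℓ) := by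
  refine hM.submartingale.exists_ae_tendsto_of_bdd (R := ((C + 1) / 2).toNNReal) fun n => ?_
  have hM1 := (hM2 n).integrable one_le_two
  rw [eLpNorm_one_eq_lintegral_enorm, ← ofReal_integral_norm_eq_lintegral_enorm hM1]
  refine ENNReal.ofReal_le_ofReal ?_
  calc ∫ ω, ‖M n ω‖ ∂P ≤ ∫ ω, (M n ω ^ 2 + 1) / 2 ∂P :=
        integral_mono hM1.norm (((hM2 n).integrable_sq.add (integrable_const 1)).div_const 2)
          fun ω => by nlinarith [sq_nonneg (|M n ω| - 1), sq_abs (M n ω), Real.norm_eq_abs (M n ω)]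
    _ = (∫ ω, M n ω ^ 2 ∂P + 1) / 2 := by
        rw [integral_div, integral_add (hM2 n).integrable_sq (integrable_const 1)]
        simp
    _ ≤ (C + 1) / 2 := by linarith [hC n]

theorem ae_exists_tendsto_sum_mul_of_condExp_sq_le [IsProbabilityMeasure P] {a δ : ℕ → ℝ}
    {η : ℕ → Ω → ℝ} {σ : ℝ} (hδ_pos : ∀ n, 0 < δ n)
    (ha2_sum : Summable fun n => a n ^ 2 / δ n ^ 2)
    (hη_meas : ∀ n, Measurable[F (n + 1)] (η n))
    (hη_sq : ∀ n, Integrable (fun ω => η n ω ^ 2) P) (hη_cond : ∀ n, P[η n|F n] =ᵐ[P] 0)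
    (hη_var : ∀ n, ∀ᵐ ω ∂P, δ n ^ 2 * P[fun ω' => η n ω' ^ 2|F n] ω ≤ σ ^ 2) :
    ∀ᵐ ω ∂P, ∃ ℓ, Tendsto (fun n => ∑ k ∈ range n, a k * η k ω) atTop (𝓝 ℓ) := by
  set ξ : ℕ → Ω → ℝ := fun k ω => a k * η k ω with hξ_def
  have hη2 (k : ℕ) : MemLp (η k) 2 P :=
    (memLp_two_iff_integrable_sq
      ((hη_meas k).mono (F.le _) le_rfl).aestronglyMeasurable).2 (hη_sq k)
  have hξm (k : ℕ) : StronglyMeasurable[F (k + 1)] (ξ k) :=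
    ((hη_meas k).const_mul (a k)).stronglyMeasurable
  have hξ2 (k : ℕ) : MemLp (ξ k) 2 P := (hη2 k).const_mul (a k)
  have hξ0 (k : ℕ) : P[ξ k|F k] =ᵐ[P] 0 :=
    (condExp_smul (a k) (η k) (F k)).trans
      (by filter_upwards [hη_cond k] with ω hω; simp [hω])
  have hη_moment (k : ℕ) : ∫ ω, η k ω ^ 2 ∂P ≤ σ ^ 2 / δ k ^ 2 :=
    integral_le_of_condExp_le (F.le k) (by
      filter_upwards [hη_var k] with ω hω
      rw [le_div_iff₀ (pow_pos (hδ_pos k) 2)]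
      linarith)
  have hM_sq (n : ℕ) :
      ∫ ω, (∑ k ∈ range n, ξ k ω) ^ 2 ∂P ≤ σ ^ 2 * ∑' k, a k ^ 2 / δ k ^ 2 := by
    rw [integral_sq_partialSum hξm hξ2 hξ0]
    calc ∑ k ∈ range n, ∫ ω, ξ k ω ^ 2 ∂P
        ≤ ∑ k ∈ range n, σ ^ 2 * (a k ^ 2 / δ k ^ 2) := sum_le_sum fun k _ => by
          simp only [hξ_def, mul_pow, integral_const_mul]
          calc a k ^ 2 * ∫ ω, η k ω ^ 2 ∂P ≤ a k ^ 2 * (σ ^ 2 / δ k ^ 2) :=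
                mul_le_mul_of_nonneg_left (hη_moment k) (sq_nonneg _)
            _ = σ ^ 2 * (a k ^ 2 / δ k ^ 2) := by ring
      _ ≤ σ ^ 2 * ∑' k, a k ^ 2 / δ k ^ 2 := by
          rw [← mul_sum]
          exact mul_le_mul_of_nonneg_left
            (ha2_sum.sum_le_tsum _ fun k _ => by positivity) (sq_nonneg σ)
  exact (martingale_partialSum hξm (fun k => (hξ2 k).integrable one_le_two)
    hξ0).exists_ae_tendsto_of_integral_sq_le (fun n => memLp_finsetSum _ fun k _ => hξ2 k) hM_sq

end MartingaleDifferences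

theorem nonstationary_kw_as_convergence_general
    {Ω : Type*} {m0 : MeasurableSpace Ω} {P : Measure Ω} [IsProbabilityMeasure P]
    (F : Filtration ℕ m0)
    (f' : ℝ → ℝ)
    (hLip : ∃ K : NNReal, LipschitzWith K f')
    (θstar : ℝ)
    (hzero : ∀ θ, f' θ = 0 ↔ θ = θstar)
    (L r : ℝ) (hr : 0 < r)
    (hdrift_pos : ∀ θ, L < θ → r < f' θ)
    (hdrift_neg : ∀ θ, θ < -L → f' θ < -r)
    (a δ : ℕ → ℝ)
    (ha_pos : ∀ n, 0 < a n) (hδ_pos : ∀ n, 0 < δ n)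
    (hδ_lim : Tendsto δ atTop (nhds 0))
    (ha_div : ¬ Summable a)
    (ha2_sum : Summable (fun n => (a n) ^ 2 / (δ n) ^ 2))
    (θseq b η Δ : ℕ → Ω → ℝ)
    (hη_meas : ∀ n, Measurable[F (n + 1)] (η n))
    (hrec : ∀ n, ∀ ω,
      θseq (n + 1) ω = θseq n ω - a n * (f' (θseq n ω) + b n ω + η n ω + Δ n ω))
    (C₀ : ℝ)
    (hb_bound : ∀ n, ∀ᵐ ω ∂P, |b n ω| ≤ C₀ * (δ n) ^ 2)
    (hη_sq : ∀ n, Integrable (fun ω => (η n ω) ^ 2) P)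
    (hη_cond : ∀ n, P[η n | F n] =ᵐ[P] 0)
    (σ : ℝ)
    (hη_var : ∀ n, ∀ᵐ ω ∂P,
      (δ n) ^ 2 * (P[(fun ω' => (η n ω') ^ 2) | F n]) ω ≤ σ ^ 2)
    (hΔ_event : ∀ᵐ ω ∂P, ∀ᶠ n in atTop, Δ n ω = 0) :
    ∀ᵐ ω ∂P, Tendsto (fun n => θseq n ω) atTop (nhds θstar) := by
  obtain ⟨K, hK⟩ := hLip
  have hconv := ae_exists_tendsto_sum_mul_of_condExp_sq_le (F := F) hδ_pos ha2_sum hη_meas hη_sq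
    hη_cond hη_var
  filter_upwards [hconv, ae_all_iff.2 hb_bound, hΔ_event] with ω ⟨ℓ, hℓ⟩ hbω hΔω
  have hc : Tendsto (fun n => b n ω + Δ n ω) atTop (𝓝 0) := by
    refine squeeze_zero_norm' ?_ (by simpa using (hδ_lim.pow 2).const_mul C₀)
    filter_upwards [hΔω] with n hn
    simpa [hn] using hbω n
  exact tendsto_of_perturbed_descent_of_tendsto_sum hK hzero hr hdrift_pos hdrift_neg ha_pos
    (tendsto_zero_of_summable_sq_div_sq hδ_pos hδ_lim ha2_sum) ha_div hc hℓ
    (fun n => by rw [hrec n ω]; ring)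

/-- Almost-sure convergence of the non-stationary Kiefer–Wolfowitz recursion
`θ_{n+1} = θ_n − a_n (f′(θ_n) + b_n + η_n + Δ_n)` to the unique zero `θ*` of `f′`. -/
theorem nonstationary_kw_as_convergence
    {Ω : Type*} {m0 : MeasurableSpace Ω} {P : Measure Ω} [IsProbabilityMeasure P]
    (F : Filtration ℕ m0)
    (f f' : ℝ → ℝ)
    (hderiv : ∀ x, HasDerivAt f (f' x) x)
    (hcont : Continuous f')
    (hLip : ∃ K : NNReal, LipschitzWith K f')
    (θstar : ℝ)
    (hzero : ∀ θ, f' θ = 0 ↔ θ = θstar)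
    (L r : ℝ) (hL : 0 < L) (hr : 0 < r)
    (hdrift_pos : ∀ θ, L < θ → r < f' θ)
    (hdrift_neg : ∀ θ, θ < -L → f' θ < -r)
    (a δ : ℕ → ℝ)
    (ha_pos : ∀ n, 0 < a n) (hδ_pos : ∀ n, 0 < δ n)
    (ha_anti : Antitone a) (hδ_anti : Antitone δ)
    (haδ_anti : Antitone (fun n => a n / δ n))
    (hδ_lim : Tendsto δ atTop (nhds 0))
    (ha_div : ¬ Summable a)
    (ha2_sum : Summable (fun n => (a n) ^ 2 / (δ n) ^ 2))
    (θseq b η Δ : ℕ → Ω → ℝ)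
    (hθ_meas : ∀ n, Measurable[F n] (θseq n))
    (hb_meas : ∀ n, Measurable[F n] (b n))
    (hη_meas : ∀ n, Measurable[F (n + 1)] (η n))
    (hΔ_meas : ∀ n, Measurable[F (n + 1)] (Δ n))
    (hrec : ∀ n, ∀ ω,
      θseq (n + 1) ω = θseq n ω - a n * (f' (θseq n ω) + b n ω + η n ω + Δ n ω))
    (C₀ : ℝ)
    (hb_bound : ∀ n, ∀ᵐ ω ∂P, |b n ω| ≤ C₀ * (δ n) ^ 2)
    (hη_sq : ∀ n, Integrable (fun ω => (η n ω) ^ 2) P)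
    (hη_cond : ∀ n, P[η n | F n] =ᵐ[P] 0)
    (σ : ℝ)
    (hη_var : ∀ n, ∀ᵐ ω ∂P,
      (δ n) ^ 2 * (P[(fun ω' => (η n ω') ^ 2) | F n]) ω ≤ σ ^ 2)
    (hΔ_event : ∀ᵐ ω ∂P, ∀ᶠ n in atTop, Δ n ω = 0) :
    ∀ᵐ ω ∂P, Tendsto (fun n => θseq n ω) atTop (nhds θstar) :=
  nonstationary_kw_as_convergence_general F f' hLip θstar hzero L r hr hdrift_pos hdrift_neg a δ
    ha_pos hδ_pos hδ_lim ha_div ha2_sum θseq b η Δ hη_meas hrec C₀ hb_bound hη_sq hη_cond σ hη_var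
    hΔ_event
end

section
/- Let (Ω, F, P) be a probability space with a filtration (F_n)_{n≥1}. Let f : ℝ → ℝ be differentiable, let θ* ∈ ℝ with f′(θ*) = 0, and suppose there is κ > 1/3 such that f′(θ)(θ − θ*) ≥ κ (θ − θ*)² for all θ ∈ ℝ. Set a_n = 1/n and δ_n = n^{−1/6} for n ≥ 1. Let (θ_n), (b_n), (η_n), (Δ_n) be square-integrable real-valued random sequences such that θ_n and b_n are F_n-measurable, η_n and Δ_n are F_{n+1}-measurable, and θ_{n+1} = θ_n − a_n (f′(θ_n) + b_n + η_n + Δ_n) for all n ≥ 1. Assume there are constants C₀ ≥ 0, F_max ≥ 0, C₁ ≥ 0, α ≥ 1/2 and 0 < C₂ < 4κ such that almost surely, for all n ≥ 1: |b_n| ≤ C₀ δ_n²; E[η_n | F_n] = 0; E[Δ_n² | F_n] ≤ (F_max² C₁ / (2 δ_n²)) n^{−2α}; and E[(f′(θ_n) + b_n + η_n + Δ_n)² | F_n] ≤ 4 F_max²/δ_n² + C₂ (θ_n − θ*)². Then limsup_{n→∞} n^{2/3} E[(θ_n − θ*)²] < ∞, i.e., E[(θ_n − θ*)²] = O(n^{−2/3}).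 -/
open MeasureTheory Filter

/-! Write `e_n = E(θ_n - θ*)²` and `g_n` for the increment. Expanding the square in
`θ_{n+1} - θ* = (θ_n - θ*) - a_n g_n` and taking expectations, the martingale term vanishes by
the pull-out property of conditional expectation, strong convexity gives the drift `-2κ a_n e_n`,
and Young's inequality absorbs the bias and mixing cross terms at the price of `4ε a_n e_n`. With
`a_n = 1/n` and `δ_n² = n^{-1/3}` every remaining term is `O(n^{-5/3})`, so for large `n`
`e_{n+1} ≤ (1 - c/n) e_n + K n^{-5/3}` with `c > 2/3`, and Chung's lemma gives
`e_n = O(n^{-2/3})`. -/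

lemma neg_mul_le_mul_sq_add_sq_div {ε : ℝ} (hε : 0 < ε) (u v : ℝ) :
    -(u * v) ≤ ε * u ^ 2 + v ^ 2 / (4 * ε) := by
  have : ε * u ^ 2 + v ^ 2 / (4 * ε) + u * v = (2 * ε * u + v) ^ 2 / (4 * ε) := by
    field_simp; ring
  linarith [show 0 ≤ (2 * ε * u + v) ^ 2 / (4 * ε) by positivity]

lemma rpow_neg_mul_one_sub_div_le {x p : ℝ} (hx : 0 < x) (hp : 0 ≤ p) :
    x ^ (-p) * (1 - p / x) ≤ (x + 1) ^ (-p) := by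
  have hsplit : (x + 1) ^ (-p) = x ^ (-p) * (1 + 1 / x) ^ (-p) := by
    rw [← Real.mul_rpow hx.le (by positivity), mul_one_add, mul_one_div_cancel hx.ne']
  have hlog : Real.log (1 + 1 / x) ≤ 1 / x := by
    linarith [Real.log_le_sub_one_of_pos (show 0 < 1 + 1 / x by positivity)]
  have hbern : 1 - p / x ≤ (1 + 1 / x) ^ (-p) := by
    rw [Real.rpow_def_of_pos (by positivity)]
    have := Real.add_one_le_exp (Real.log (1 + 1 / x) * -p)
    have := mul_le_mul_of_nonneg_left hlog hp
    rw [div_eq_mul_one_div p x]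
    linarith
  rw [hsplit]
  exact mul_le_mul_of_nonneg_left hbern (by positivity)

theorem exists_rpow_mul_le_of_chung_recursion {e : ℕ → ℝ} {p c K : ℝ} (hp : 0 ≤ p) (hpc : p < c)
    (h : ∀ᶠ n : ℕ in atTop, e (n + 1) ≤ (1 - c / n) * e n + K / (n : ℝ) ^ (p + 1)) :
    ∃ M, ∀ᶠ n : ℕ in atTop, (n : ℝ) ^ p * e n ≤ M := by
  obtain ⟨N, hN⟩ := eventually_atTop.1 (h.and (eventually_gt_atTop ⌈c⌉₊))
  set M := max (K / (c - p)) (max ((N : ℝ) ^ p * e N) 0)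
  have hM : 0 ≤ M := le_max_of_le_right (le_max_right _ _)
  have hKM : K ≤ (c - p) * M := by
    rw [← div_le_iff₀' (sub_pos.2 hpc)]; exact le_max_left _ _
  refine ⟨M, eventually_atTop.2 ⟨N, fun n hn => ?_⟩⟩
  induction n, hn using Nat.le_induction with
  | base => exact le_max_of_le_right (le_max_left _ _)
  | succ n hNn ih =>
    obtain ⟨hrec, hcn⟩ := hN n hNn
    have hx : (0 : ℝ) < n := by exact_mod_cast (Nat.zero_le _).trans_lt hcn
    have hc : c / n ≤ 1 := (div_le_one hx).2 ((Nat.le_ceil c).trans (by exact_mod_cast hcn.le))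
    have hen : e n ≤ M * (n : ℝ) ^ (-p) := by
      rw [Real.rpow_neg hx.le, ← div_eq_mul_inv, le_div_iff₀' (by positivity)]; exact ih
    have hK : K / (n : ℝ) ^ (p + 1) ≤ (c - p) * M * (n : ℝ) ^ (-p) / n := by
      rw [Real.rpow_add_one hx.ne', Real.rpow_neg hx.le, div_mul_eq_div_div, div_eq_mul_inv K]
      gcongr
    have hnext : e (n + 1) ≤ M * ((n : ℝ) + 1) ^ (-p) := calc
      e (n + 1) ≤ (1 - c / n) * (M * (n : ℝ) ^ (-p)) + (c - p) * M * (n : ℝ) ^ (-p) / n := by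
          have := mul_le_mul_of_nonneg_left hen (sub_nonneg.2 hc)
          linarith
      _ = M * ((n : ℝ) ^ (-p) * (1 - p / n)) := by field_simp; ring
      _ ≤ M * ((n : ℝ) + 1) ^ (-p) := by gcongr; exact rpow_neg_mul_one_sub_div_le hx hp
    rw [Real.rpow_neg (by positivity), ← div_eq_mul_inv, le_div_iff₀' (by positivity)] at hnext
    push_cast
    exact hnext

lemma eventually_one_sub_div_add_div_sq_le {c c' C : ℝ} (h : c' < c) :
    ∀ᶠ n : ℕ in atTop, 1 - c / n + C / (n : ℝ) ^ 2 ≤ 1 - c' / n := by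
  filter_upwards [eventually_gt_atTop 0,
    (tendsto_const_div_atTop_nhds_zero_nat C).eventually_lt_const (sub_pos.2 h)]
    with n hn hC
  have hx : (0 : ℝ) < n := by exact_mod_cast hn
  have : C / (n : ℝ) ^ 2 ≤ (c - c') / n := by
    rw [sq, ← div_div]; exact div_le_div_of_nonneg_right hC.le hx.le
  have : (c - c') / n = c / n - c' / n := sub_div _ _ _
  linarith

section L2

variable {Ω : Type*} {m m0 : MeasurableSpace Ω} {P : Measure Ω}

lemma integral_mul_eq_zero_of_condExp_eq_zero [IsFiniteMeasure P] (hm : m ≤ m0) {X η : Ω → ℝ}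
    (hX : StronglyMeasurable[m] X) (hXη : Integrable (X * η) P) (hη : Integrable η P)
    (hη0 : P[η | m] =ᵐ[P] 0) : ∫ ω, X ω * η ω ∂P = 0 := by
  have hpull : P[X * η | m] =ᵐ[P] 0 := by
    filter_upwards [condExp_mul_of_stronglyMeasurable_left hX hXη hη, hη0] with ω h h0
    simp [h, h0]
  change ∫ ω, (X * η) ω ∂P = 0
  rw [← integral_condExp hm, integral_congr_ae hpull]
  simp

lemma integral_le_of_condExp_le_s1 [IsFiniteMeasure P] (hm : m ≤ m0) {Y Z : Ω → ℝ}
    (hZ : Integrable Z P) (h : P[Y | m] ≤ᵐ[P] Z) : ∫ ω, Y ω ∂P ≤ ∫ ω, Z ω ∂P := by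
  rw [← integral_condExp hm]
  exact integral_mono_ae integrable_condExp hZ h

theorem integral_sq_sub_mul_le [IsFiniteMeasure P] (hm : m ≤ m0)
    {X D b η Δ : Ω → ℝ} (hXm : StronglyMeasurable[m] X) (hX : MemLp X 2 P) (hD : MemLp D 2 P)
    (hb : MemLp b 2 P) (hη : MemLp η 2 P) (hΔ : MemLp Δ 2 P)
    {κ a ε : ℝ} (ha : 0 ≤ a) (hε : 0 < ε)
    (hconv : ∀ ω, κ * X ω ^ 2 ≤ D ω * X ω) (hη0 : P[η | m] =ᵐ[P] 0) :
    ∫ ω, (X ω - a * (D ω + b ω + η ω + Δ ω)) ^ 2 ∂P ≤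
      (1 - 2 * a * (κ - 2 * ε)) * ∫ ω, X ω ^ 2 ∂P
        + a / (2 * ε) * (∫ ω, b ω ^ 2 ∂P + ∫ ω, Δ ω ^ 2 ∂P)
        + a ^ 2 * ∫ ω, (D ω + b ω + η ω + Δ ω) ^ 2 ∂P := by
  have hG : MemLp (fun ω => D ω + b ω + η ω + Δ ω) 2 P := ((hD.add hb).add hη).add hΔ
  have hXη : Integrable (fun ω => X ω * η ω) P := hX.integrable_mul hη
  have hpt : ∀ ω, (X ω - a * (D ω + b ω + η ω + Δ ω)) ^ 2 ≤
      (1 - 2 * a * (κ - 2 * ε)) * X ω ^ 2 + a / (2 * ε) * (b ω ^ 2 + Δ ω ^ 2)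
        + a ^ 2 * (D ω + b ω + η ω + Δ ω) ^ 2 - 2 * a * (X ω * η ω) := by
    intro ω
    have hcross : 0 ≤ (D ω * X ω - κ * X ω ^ 2) + (ε * X ω ^ 2 + b ω ^ 2 / (4 * ε) + X ω * b ω)
        + (ε * X ω ^ 2 + Δ ω ^ 2 / (4 * ε) + X ω * Δ ω) := by
      linarith [hconv ω, neg_mul_le_mul_sq_add_sq_div hε (X ω) (b ω),
        neg_mul_le_mul_sq_add_sq_div hε (X ω) (Δ ω)]
    linear_combination 2 * mul_nonneg ha hcross
  have hX2 : Integrable (fun ω => X ω ^ 2) P := hX.integrable_sq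
  have hbΔ : Integrable (fun ω => b ω ^ 2 + Δ ω ^ 2) P := hb.integrable_sq.add hΔ.integrable_sq
  have hG2 : Integrable (fun ω => (D ω + b ω + η ω + Δ ω) ^ 2) P := hG.integrable_sq
  have hmono : ∫ ω, (X ω - a * (D ω + b ω + η ω + Δ ω)) ^ 2 ∂P ≤
      ∫ ω, ((1 - 2 * a * (κ - 2 * ε)) * X ω ^ 2 + a / (2 * ε) * (b ω ^ 2 + Δ ω ^ 2)
        + a ^ 2 * (D ω + b ω + η ω + Δ ω) ^ 2 - 2 * a * (X ω * η ω)) ∂P :=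
    integral_mono (hX.sub (hG.const_mul a)).integrable_sq
      ((((hX2.const_mul _).add (hbΔ.const_mul _)).add (hG2.const_mul _)).sub (hXη.const_mul _)) hpt
  rw [integral_sub ?_ (hXη.const_mul _), integral_add ?_ (hG2.const_mul _),
    integral_add (hX2.const_mul _) (hbΔ.const_mul _),
    integral_const_mul, integral_const_mul, integral_const_mul, integral_const_mul,
    integral_add hb.integrable_sq hΔ.integrable_sq,
    integral_mul_eq_zero_of_condExp_eq_zero hm hXm hXη (hη.integrable one_le_two) hη0] at hmono
  · linarith
  · exact (hX2.const_mul _).add (hbΔ.const_mul _)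
  · exact ((hX2.const_mul _).add (hbΔ.const_mul _)).add (hG2.const_mul _)

-- The schedule `a = 1/n`, `δ² = n^{-1/3}` in terms of `t = n^{1/3}`: all exponents are integral.
theorem integral_sq_sub_div_pow_three_le [IsProbabilityMeasure P] (hm : m ≤ m0)
    {X D b η Δ : Ω → ℝ} (hXm : StronglyMeasurable[m] X) (hX : MemLp X 2 P) (hD : MemLp D 2 P)
    (hb : MemLp b 2 P) (hη : MemLp η 2 P) (hΔ : MemLp Δ 2 P)
    {κ ε t C₀ B S C₂ : ℝ} (hε : 0 < ε) (ht : 0 < t)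
    (hconv : ∀ ω, κ * X ω ^ 2 ≤ D ω * X ω) (hη0 : P[η | m] =ᵐ[P] 0)
    (hb_le : ∀ᵐ ω ∂P, |b ω| ≤ C₀ / t)
    (hΔ_le : ∀ᵐ ω ∂P, P[fun ω => Δ ω ^ 2 | m] ω ≤ B / t ^ 2)
    (hG_le : ∀ᵐ ω ∂P,
      P[fun ω => (D ω + b ω + η ω + Δ ω) ^ 2 | m] ω ≤ S * t + C₂ * X ω ^ 2) :
    ∫ ω, (X ω - (D ω + b ω + η ω + Δ ω) / t ^ 3) ^ 2 ∂P ≤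
      (1 - (2 * κ - 4 * ε) / t ^ 3 + C₂ / t ^ 6) * ∫ ω, X ω ^ 2 ∂P
        + (C₀ ^ 2 / (2 * ε) + B / (2 * ε) + S) / t ^ 5 := by
  have hEb : ∫ ω, b ω ^ 2 ∂P ≤ C₀ ^ 2 / t ^ 2 := by
    calc ∫ ω, b ω ^ 2 ∂P ≤ ∫ _, (C₀ / t) ^ 2 ∂P :=
          integral_mono_ae hb.integrable_sq (integrable_const _)
            (hb_le.mono fun ω h => sq_le_sq' (abs_le.1 h).1 (abs_le.1 h).2)
      _ = C₀ ^ 2 / t ^ 2 := by simp [div_pow]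
  have hEΔ : ∫ ω, Δ ω ^ 2 ∂P ≤ B / t ^ 2 :=
    (integral_le_of_condExp_le_s1 hm (integrable_const _) hΔ_le).trans_eq (by simp)
  have hEG : ∫ ω, (D ω + b ω + η ω + Δ ω) ^ 2 ∂P ≤ S * t + C₂ * ∫ ω, X ω ^ 2 ∂P := by
    refine (integral_le_of_condExp_le_s1 (Z := fun ω => S * t + C₂ * X ω ^ 2) hm
      ((integrable_const _).add (hX.integrable_sq.const_mul _)) hG_le).trans_eq ?_
    rw [integral_add (integrable_const _) (hX.integrable_sq.const_mul _)]
    simp [integral_const_mul]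
  calc ∫ ω, (X ω - (D ω + b ω + η ω + Δ ω) / t ^ 3) ^ 2 ∂P
      = ∫ ω, (X ω - 1 / t ^ 3 * (D ω + b ω + η ω + Δ ω)) ^ 2 ∂P := by
        simp only [one_div_mul_eq_div]
    _ ≤ (1 - 2 * (1 / t ^ 3) * (κ - 2 * ε)) * ∫ ω, X ω ^ 2 ∂P
          + 1 / t ^ 3 / (2 * ε) * (∫ ω, b ω ^ 2 ∂P + ∫ ω, Δ ω ^ 2 ∂P)
          + (1 / t ^ 3) ^ 2 * ∫ ω, (D ω + b ω + η ω + Δ ω) ^ 2 ∂P :=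
        integral_sq_sub_mul_le hm hXm hX hD hb hη hΔ (by positivity) hε hconv hη0
    _ ≤ (1 - 2 * (1 / t ^ 3) * (κ - 2 * ε)) * ∫ ω, X ω ^ 2 ∂P
          + 1 / t ^ 3 / (2 * ε) * (C₀ ^ 2 / t ^ 2 + B / t ^ 2)
          + (1 / t ^ 3) ^ 2 * (S * t + C₂ * ∫ ω, X ω ^ 2 ∂P) := by gcongr
    _ = _ := by field_simp; ring

theorem integral_sq_kw_step_le [IsProbabilityMeasure P] (hm : m ≤ m0)
    {X D b η Δ : Ω → ℝ} (hXm : StronglyMeasurable[m] X) (hX : MemLp X 2 P) (hD : MemLp D 2 P)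
    (hb : MemLp b 2 P) (hη : MemLp η 2 P) (hΔ : MemLp Δ 2 P)
    {κ ε x a δ α C₀ A S C₂ : ℝ} (hε : 0 < ε) (hx : 1 ≤ x) (ha : a = 1 / x)
    (hδ : δ = x ^ (-(1 : ℝ) / 6)) (hα : 1 / 2 ≤ α) (hA : 0 ≤ A)
    (hconv : ∀ ω, κ * X ω ^ 2 ≤ D ω * X ω) (hη0 : P[η | m] =ᵐ[P] 0)
    (hb_le : ∀ᵐ ω ∂P, |b ω| ≤ C₀ * δ ^ 2)
    (hΔ_le : ∀ᵐ ω ∂P, P[fun ω => Δ ω ^ 2 | m] ω ≤ A / (2 * δ ^ 2) * x ^ (-(2 : ℝ) * α))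
    (hG_le : ∀ᵐ ω ∂P,
      P[fun ω => (D ω + b ω + η ω + Δ ω) ^ 2 | m] ω ≤ S / δ ^ 2 + C₂ * X ω ^ 2) :
    ∫ ω, (X ω - a * (D ω + b ω + η ω + Δ ω)) ^ 2 ∂P ≤
      (1 - (2 * κ - 4 * ε) / x + C₂ / x ^ 2) * ∫ ω, X ω ^ 2 ∂P
        + (C₀ ^ 2 / (2 * ε) + A / (4 * ε) + S) / x ^ ((2 : ℝ) / 3 + 1) := by
  have hx0 : 0 < x := by linarith
  set t := x ^ (1 / 3 : ℝ)
  have ht : 0 < t := by positivity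
  have ht3 : t ^ 3 = x := by
    rw [← Real.rpow_natCast, ← Real.rpow_mul hx0.le]; norm_num
  have ht5 : t ^ 5 = x ^ ((2 : ℝ) / 3 + 1) := by
    rw [← Real.rpow_natCast, ← Real.rpow_mul hx0.le]; norm_num
  have hδ2 : δ ^ 2 = t⁻¹ := by
    rw [hδ, ← Real.rpow_natCast, ← Real.rpow_mul hx0.le, ← Real.rpow_neg hx0.le]
    norm_num
  have hr : x ^ (-2 * α) ≤ (t ^ 3)⁻¹ := by
    rw [ht3, ← Real.rpow_neg_one]
    exact Real.rpow_le_rpow_of_exponent_le hx (by linarith)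
  calc ∫ ω, (X ω - a * (D ω + b ω + η ω + Δ ω)) ^ 2 ∂P
      = ∫ ω, (X ω - (D ω + b ω + η ω + Δ ω) / t ^ 3) ^ 2 ∂P := by
        simp only [ha, ← ht3, one_div_mul_eq_div]
    _ ≤ (1 - (2 * κ - 4 * ε) / t ^ 3 + C₂ / t ^ 6) * ∫ ω, X ω ^ 2 ∂P
          + (C₀ ^ 2 / (2 * ε) + A / 2 / (2 * ε) + S) / t ^ 5 := by
        refine integral_sq_sub_div_pow_three_le hm hXm hX hD hb hη hΔ hε ht hconv hη0 ?_ ?_ ?_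
        · filter_upwards [hb_le] with ω hω
          rwa [hδ2, ← div_eq_mul_inv] at hω
        · filter_upwards [hΔ_le] with ω hω
          refine hω.trans ((mul_le_mul_of_nonneg_left hr (by positivity)).trans_eq ?_)
          rw [hδ2]; field_simp
        · filter_upwards [hG_le] with ω hω
          rwa [hδ2, div_inv_eq_mul] at hω
    _ = _ := by rw [show t ^ 6 = (t ^ 3) ^ 2 by ring, ht3, ht5]; ring

end L2

theorem nonstationary_kw_rate_general
    {Ω : Type*} {m0 : MeasurableSpace Ω} {P : Measure Ω} [IsProbabilityMeasure P]
    (F : Filtration ℕ m0)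
    (f' : ℝ → ℝ)
    (θstar : ℝ)
    (κ : ℝ) (hκ : 1 / 3 < κ)
    (hconv : ∀ θ, κ * (θ - θstar) ^ 2 ≤ f' θ * (θ - θstar))
    (a δ : ℕ → ℝ)
    (ha : ∀ n, 1 ≤ n → a n = 1 / (n : ℝ))
    (hδ : ∀ n, 1 ≤ n → δ n = (n : ℝ) ^ (-(1 : ℝ) / 6))
    (θseq b η Δ : ℕ → Ω → ℝ)
    (hθ_sq : ∀ n, Integrable (fun ω => (θseq n ω) ^ 2) P)
    (hb_sq : ∀ n, Integrable (fun ω => (b n ω) ^ 2) P)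
    (hη_sq : ∀ n, Integrable (fun ω => (η n ω) ^ 2) P)
    (hΔ_sq : ∀ n, Integrable (fun ω => (Δ n ω) ^ 2) P)
    (hθ_meas : ∀ n, Measurable[F n] (θseq n))
    (hb_meas : ∀ n, Measurable[F n] (b n))
    (hη_meas : ∀ n, Measurable[F (n + 1)] (η n))
    (hΔ_meas : ∀ n, Measurable[F (n + 1)] (Δ n))
    (hrec : ∀ n, 1 ≤ n → ∀ ω,
      θseq (n + 1) ω = θseq n ω - a n * (f' (θseq n ω) + b n ω + η n ω + Δ n ω))
    (C₀ Fmax C₁ α C₂ : ℝ)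
    (hC₁ : 0 ≤ C₁) (hα : 1 / 2 ≤ α)
    (hb_bound : ∀ n, 1 ≤ n → ∀ᵐ ω ∂P, |b n ω| ≤ C₀ * (δ n) ^ 2)
    (hη_cond : ∀ n, 1 ≤ n → P[η n | F n] =ᵐ[P] 0)
    (hΔ_cond : ∀ n, 1 ≤ n → ∀ᵐ ω ∂P,
      (P[(fun ω' => (Δ n ω') ^ 2) | F n]) ω ≤
        (Fmax ^ 2 * C₁ / (2 * (δ n) ^ 2)) * (n : ℝ) ^ (-(2 : ℝ) * α))
    (hincr_cond : ∀ n, 1 ≤ n → ∀ᵐ ω ∂P,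
      (P[(fun ω' => (f' (θseq n ω') + b n ω' + η n ω' + Δ n ω') ^ 2) | F n]) ω ≤
        4 * Fmax ^ 2 / (δ n) ^ 2 + C₂ * (θseq n ω - θstar) ^ 2) :
    ∃ C : ℝ, ∀ᶠ n : ℕ in atTop,
      (n : ℝ) ^ ((2 : ℝ) / 3) * ∫ ω, (θseq n ω - θstar) ^ 2 ∂P ≤ C := by
  have hL2 : ∀ {k} {g : Ω → ℝ}, Measurable[F k] g → Integrable (fun ω => g ω ^ 2) P →
      MemLp g 2 P := fun hg hg2 =>
    (memLp_two_iff_integrable_sq (hg.mono (F.le _) le_rfl).aestronglyMeasurable).2 hg2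
  obtain ⟨ε, hε, hεκ⟩ : ∃ ε : ℝ, 0 < ε ∧ 2 * κ - 4 * ε = κ + 1 / 3 :=
    ⟨(κ - 1 / 3) / 4, by linarith, by ring⟩
  have hstep : ∀ n, 1 ≤ n → ∫ ω, (θseq (n + 1) ω - θstar) ^ 2 ∂P ≤
      (1 - (κ + 1 / 3) / n + C₂ / (n : ℝ) ^ 2) * ∫ ω, (θseq n ω - θstar) ^ 2 ∂P
        + (C₀ ^ 2 / (2 * ε) + Fmax ^ 2 * C₁ / (4 * ε) + 4 * Fmax ^ 2)
          / (n : ℝ) ^ ((2 : ℝ) / 3 + 1) := by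
    intro n hn
    have hθ := hL2 (hθ_meas n) (hθ_sq n)
    have hb := hL2 (hb_meas n) (hb_sq n)
    have hη := hL2 (hη_meas n) (hη_sq n)
    have hΔ := hL2 (hΔ_meas n) (hΔ_sq n)
    have hD : MemLp (fun ω => f' (θseq n ω)) 2 P := by
      have hf' : (fun ω => f' (θseq n ω)) =
          fun ω => n * (θseq n ω - θseq (n + 1) ω) - b n ω - η n ω - Δ n ω := by
        funext ω; rw [hrec n hn ω, ha n hn]; field_simp; ring
      rw [hf']
      exact ((((hθ.sub (hL2 (hθ_meas (n + 1)) (hθ_sq (n + 1)))).const_mul _).sub hb).sub hη).sub hΔ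
    simp only [hrec n hn, sub_right_comm _ (a n * _) θstar, ← hεκ]
    exact integral_sq_kw_step_le (F.le n) (X := fun ω => θseq n ω - θstar)
      ((hθ_meas n).sub measurable_const).stronglyMeasurable (hθ.sub (memLp_const θstar))
      hD hb hη hΔ hε (by exact_mod_cast hn) (ha n hn) (hδ n hn) hα
      (mul_nonneg (sq_nonneg Fmax) hC₁) (fun ω => hconv (θseq n ω))
      (hη_cond n hn) (hb_bound n hn) (hΔ_cond n hn) (hincr_cond n hn)
  exact exists_rpow_mul_le_of_chung_recursion
    (e := fun n => ∫ ω, (θseq n ω - θstar) ^ 2 ∂P) (p := 2 / 3) (c := (κ + 1) / 2)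
    (K := C₀ ^ 2 / (2 * ε) + Fmax ^ 2 * C₁ / (4 * ε) + 4 * Fmax ^ 2) (by norm_num) (by linarith)
    (by
      filter_upwards [eventually_ge_atTop 1,
        eventually_one_sub_div_add_div_sq_le (C := C₂) (show (κ + 1) / 2 < κ + 1 / 3 by linarith)]
        with n hn hcoef
      refine (hstep n hn).trans ?_
      gcongr)

/-- `O(n^{-2/3})` convergence rate of the non-stationary Kiefer–Wolfowitz recursion,
with step sizes `a_n = 1/n` and finite-difference widths `δ_n = n^{-1/6}`. -/
theorem nonstationary_kw_rate
    {Ω : Type*} {m0 : MeasurableSpace Ω} {P : Measure Ω} [IsProbabilityMeasure P]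
    (F : Filtration ℕ m0)
    (f f' : ℝ → ℝ)
    (hderiv : ∀ x, HasDerivAt f (f' x) x)
    (θstar : ℝ) (hcrit : f' θstar = 0)
    (κ : ℝ) (hκ : 1 / 3 < κ)
    (hconv : ∀ θ, κ * (θ - θstar) ^ 2 ≤ f' θ * (θ - θstar))
    (a δ : ℕ → ℝ)
    (ha : ∀ n, 1 ≤ n → a n = 1 / (n : ℝ))
    (hδ : ∀ n, 1 ≤ n → δ n = (n : ℝ) ^ (-(1 : ℝ) / 6))
    (θseq b η Δ : ℕ → Ω → ℝ)
    (hθ_sq : ∀ n, Integrable (fun ω => (θseq n ω) ^ 2) P)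
    (hb_sq : ∀ n, Integrable (fun ω => (b n ω) ^ 2) P)
    (hη_sq : ∀ n, Integrable (fun ω => (η n ω) ^ 2) P)
    (hΔ_sq : ∀ n, Integrable (fun ω => (Δ n ω) ^ 2) P)
    (hθ_meas : ∀ n, Measurable[F n] (θseq n))
    (hb_meas : ∀ n, Measurable[F n] (b n))
    (hη_meas : ∀ n, Measurable[F (n + 1)] (η n))
    (hΔ_meas : ∀ n, Measurable[F (n + 1)] (Δ n))
    (hrec : ∀ n, 1 ≤ n → ∀ ω,
      θseq (n + 1) ω = θseq n ω - a n * (f' (θseq n ω) + b n ω + η n ω + Δ n ω))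
    (C₀ Fmax C₁ α C₂ : ℝ)
    (hC₀ : 0 ≤ C₀) (hFmax : 0 ≤ Fmax) (hC₁ : 0 ≤ C₁) (hα : 1 / 2 ≤ α)
    (hC₂_pos : 0 < C₂) (hC₂ : C₂ < 4 * κ)
    (hb_bound : ∀ n, 1 ≤ n → ∀ᵐ ω ∂P, |b n ω| ≤ C₀ * (δ n) ^ 2)
    (hη_cond : ∀ n, 1 ≤ n → P[η n | F n] =ᵐ[P] 0)
    (hΔ_cond : ∀ n, 1 ≤ n → ∀ᵐ ω ∂P,
      (P[(fun ω' => (Δ n ω') ^ 2) | F n]) ω ≤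
        (Fmax ^ 2 * C₁ / (2 * (δ n) ^ 2)) * (n : ℝ) ^ (-(2 : ℝ) * α))
    (hincr_cond : ∀ n, 1 ≤ n → ∀ᵐ ω ∂P,
      (P[(fun ω' => (f' (θseq n ω') + b n ω' + η n ω' + Δ n ω') ^ 2) | F n]) ω ≤
        4 * Fmax ^ 2 / (δ n) ^ 2 + C₂ * (θseq n ω - θstar) ^ 2) :
    ∃ C : ℝ, ∀ᶠ n : ℕ in atTop,
      (n : ℝ) ^ ((2 : ℝ) / 3) * ∫ ω, (θseq n ω - θstar) ^ 2 ∂P ≤ C :=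
  nonstationary_kw_rate_general F f' θstar κ hκ hconv a δ ha hδ θseq b η Δ hθ_sq hb_sq hη_sq hΔ_sq
    hθ_meas hb_meas hη_meas hΔ_meas hrec C₀ Fmax C₁ α C₂ hC₁ hα hb_bound hη_cond hΔ_cond hincr_cond
end

section
/- Let κ > 1/3 and 0 ≤ C₂ < 4κ, and let C_u ≥ 0, v ≥ 0 be constants. For n ≥ 1 set q_n = (1/n)(2κ − C₂/(2n)) and assume q_n ≤ 1 for all n ≥ 1. Let (ξ_n)_{n≥1} be a sequence of nonnegative real numbers satisfying, for all n ≥ 1, ξ_{n+1} ≤ (1 − q_n) ξ_n + C_u n^{−4/3} ξ_n^{1/2} + v n^{−5/3}. Then limsup_{n→∞} n^{2/3} ξ_n < ∞. -/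
open Filter

lemma kw_step_aux (n : ℕ) (hn : 1 ≤ n) :
    (n : ℝ) ^ (-(2 : ℝ) / 3) - (2 / 3) * (n : ℝ) ^ (-(5 : ℝ) / 3)
      ≤ ((n : ℝ) + 1) ^ (-(2 : ℝ) / 3) := by
  have hn0 : (0 : ℝ) < n := by exact_mod_cast hn
  have hn1 : (0 : ℝ) < (n : ℝ) + 1 := by linarith
  have hn1' : (1 : ℝ) ≤ n := by exact_mod_cast hn
  -- Bernoulli
  have hb : ((1 : ℝ) + 1 / n) ^ ((2 : ℝ) / 3) ≤ 1 + (2 / 3) * (1 / n) :=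
    rpow_one_add_le_one_add_mul_self (by
      have : (0:ℝ) ≤ 1 / (n:ℝ) := by positivity
      linarith) (by norm_num) (by norm_num)
  have h1 : ((n : ℝ) + 1) ^ ((2 : ℝ) / 3)
      = (n : ℝ) ^ ((2 : ℝ) / 3) * ((1 : ℝ) + 1 / n) ^ ((2 : ℝ) / 3) := by
    rw [← Real.mul_rpow hn0.le (by positivity)]
    congr 1
    field_simp
  have hfrac : (0 : ℝ) ≤ 1 - (2 / 3) / n := by
    have : (2 : ℝ) / 3 / n ≤ 2 / 3 := by
      apply div_le_of_le_mul₀ hn0.le (by norm_num)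
      nlinarith
    linarith
  have hA : (0 : ℝ) < (n : ℝ) ^ ((2 : ℝ) / 3) := Real.rpow_pos_of_pos hn0 _
  have key : ((n : ℝ) + 1) ^ ((2 : ℝ) / 3) * (1 - (2 / 3) / n) ≤ (n : ℝ) ^ ((2 : ℝ) / 3) := by
    calc ((n : ℝ) + 1) ^ ((2 : ℝ) / 3) * (1 - (2 / 3) / n)
        = (n : ℝ) ^ ((2 : ℝ) / 3) * (((1 : ℝ) + 1 / n) ^ ((2 : ℝ) / 3) * (1 - (2 / 3) / n)) := by
          rw [h1]; ring
      _ ≤ (n : ℝ) ^ ((2 : ℝ) / 3) * ((1 + (2 / 3) * (1 / n)) * (1 - (2 / 3) / n)) := by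
          apply mul_le_mul_of_nonneg_left (mul_le_mul_of_nonneg_right hb hfrac) hA.le
      _ ≤ (n : ℝ) ^ ((2 : ℝ) / 3) * 1 := by
          apply mul_le_mul_of_nonneg_left _ hA.le
          have hinv : (0:ℝ) ≤ ((n:ℝ)⁻¹) * ((n:ℝ)⁻¹) := by positivity
          have hid : (1 + (2/3) * (1/(n:ℝ))) * (1 - (2/3)/(n:ℝ))
              = 1 - (4/9) * ((n:ℝ)⁻¹ * (n:ℝ)⁻¹) := by
            field_simp
            ring
          rw [hid]
          linarith
      _ = (n : ℝ) ^ ((2 : ℝ) / 3) := mul_one _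
  -- now convert to negative powers
  have hB : (0 : ℝ) < ((n : ℝ) + 1) ^ ((2 : ℝ) / 3) := Real.rpow_pos_of_pos hn1 _
  have e1 : (n : ℝ) ^ (-(2 : ℝ) / 3) = ((n : ℝ) ^ ((2 : ℝ) / 3))⁻¹ := by
    rw [← Real.rpow_neg hn0.le]; norm_num
  have e2 : ((n : ℝ) + 1) ^ (-(2 : ℝ) / 3) = (((n : ℝ) + 1) ^ ((2 : ℝ) / 3))⁻¹ := by
    rw [← Real.rpow_neg hn1.le]; norm_num
  have e3 : (n : ℝ) ^ (-(5 : ℝ) / 3) = (n : ℝ) ^ (-(2 : ℝ) / 3) * (n : ℝ)⁻¹ := by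
    rw [← Real.rpow_neg_one (n : ℝ), ← Real.rpow_add hn0]; norm_num
  rw [e1, e2, e3, e1]
  have goal' : (((n : ℝ) ^ ((2 : ℝ) / 3))⁻¹ - 2 / 3 * (((n : ℝ) ^ ((2 : ℝ) / 3))⁻¹ * (n:ℝ)⁻¹))
      * ((n : ℝ) ^ ((2 : ℝ) / 3) * ((n : ℝ) + 1) ^ ((2 : ℝ) / 3))
      ≤ (((n : ℝ) + 1) ^ ((2 : ℝ) / 3))⁻¹ * ((n : ℝ) ^ ((2 : ℝ) / 3) * ((n : ℝ) + 1) ^ ((2 : ℝ) / 3)) := by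
    have lhs_eq : (((n : ℝ) ^ ((2 : ℝ) / 3))⁻¹ - 2 / 3 * (((n : ℝ) ^ ((2 : ℝ) / 3))⁻¹ * (n:ℝ)⁻¹))
        * ((n : ℝ) ^ ((2 : ℝ) / 3) * ((n : ℝ) + 1) ^ ((2 : ℝ) / 3))
        = ((n : ℝ) + 1) ^ ((2 : ℝ) / 3) * (1 - (2 / 3) / n) := by
      field_simp
    have rhs_eq : (((n : ℝ) + 1) ^ ((2 : ℝ) / 3))⁻¹ * ((n : ℝ) ^ ((2 : ℝ) / 3) * ((n : ℝ) + 1) ^ ((2 : ℝ) / 3))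
        = (n : ℝ) ^ ((2 : ℝ) / 3) := by
      field_simp
    rw [lhs_eq, rhs_eq]
    exact key
  have hprod : (0 : ℝ) < (n : ℝ) ^ ((2 : ℝ) / 3) * ((n : ℝ) + 1) ^ ((2 : ℝ) / 3) := by positivity
  exact le_of_mul_le_mul_right goal' hprod


/-- The deterministic recursion satisfied by `ξ_n = E[(θ_n − θ*)²]` implies that
`ξ_n = O(n^{-2/3})`. -/
theorem kw_recursion_rate
    (κ C₂ Cu v : ℝ)
    (hκ : 1 / 3 < κ) (hC₂_nonneg : 0 ≤ C₂) (hC₂ : C₂ < 4 * κ)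
    (hCu : 0 ≤ Cu) (hv : 0 ≤ v)
    (q : ℕ → ℝ)
    (hq : ∀ n : ℕ, 1 ≤ n → q n = (1 / (n : ℝ)) * (2 * κ - C₂ / (2 * (n : ℝ))))
    (hq_le_one : ∀ n : ℕ, 1 ≤ n → q n ≤ 1)
    (ξ : ℕ → ℝ)
    (hξ_nonneg : ∀ n : ℕ, 1 ≤ n → 0 ≤ ξ n)
    (hrec : ∀ n : ℕ, 1 ≤ n →
      ξ (n + 1) ≤ (1 - q n) * ξ n + Cu * (n : ℝ) ^ (-(4 : ℝ) / 3) * Real.sqrt (ξ n)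
        + v * (n : ℝ) ^ (-(5 : ℝ) / 3)) :
    ∃ C : ℝ, ∀ᶠ n : ℕ in atTop, (n : ℝ) ^ ((2 : ℝ) / 3) * ξ n ≤ C := by
  set e := κ - 1 / 3 with he
  have he0 : 0 < e := by simp only [he]; linarith
  obtain ⟨N₀, hN₀⟩ := exists_nat_ge (C₂ / (2 * e))
  set N := max N₀ 1 with hNdef
  have hN1 : 1 ≤ N := le_max_right _ _
  have hNC : C₂ / (2 * e) ≤ (N : ℝ) :=
    hN₀.trans (by exact_mod_cast Nat.le_max_left N₀ 1)
  set M := max (max 1 (ξ N * (N : ℝ) ^ ((2 : ℝ) / 3))) (max ((2 * Cu / e) ^ 2) (2 * v / e))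
    with hMdef
  have hM1 : (1 : ℝ) ≤ M := le_trans (le_max_left _ _) (le_max_left _ _)
  have hM0 : (0 : ℝ) < M := lt_of_lt_of_le one_pos hM1
  have hkey : Cu * Real.sqrt M + v ≤ e * M := by
    have hs0 : 0 ≤ Real.sqrt M := Real.sqrt_nonneg M
    have hss : Real.sqrt M * Real.sqrt M = M := Real.mul_self_sqrt hM0.le
    have h1 : (2 * Cu / e) ^ 2 ≤ M := le_trans (le_max_left _ _) (le_max_right _ _)
    have h2 : 2 * v / e ≤ M := le_trans (le_max_right _ _) (le_max_right _ _)
    have hs1 : 2 * Cu / e ≤ Real.sqrt M := by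
      have := Real.sqrt_le_sqrt h1
      rwa [Real.sqrt_sq (by positivity)] at this
    have hCu' : 2 * Cu ≤ e * Real.sqrt M := by
      rw [div_le_iff₀ he0] at hs1; linarith
    have hv' : 2 * v ≤ e * M := by
      rw [div_le_iff₀ he0] at h2; linarith
    nlinarith [mul_le_mul_of_nonneg_right hCu' hs0]
  have main : ∀ n : ℕ, N ≤ n → ξ n ≤ M * (n : ℝ) ^ (-(2 : ℝ) / 3) := by
    intro n hn
    induction n, hn using Nat.le_induction with
    | base =>
      have hN0 : (0 : ℝ) < N := by exact_mod_cast hN1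
      have hb : ξ N * (N : ℝ) ^ ((2 : ℝ) / 3) ≤ M :=
        le_trans (le_max_right _ _) (le_max_left _ _)
      have hpos : (0 : ℝ) < (N : ℝ) ^ ((2 : ℝ) / 3) := Real.rpow_pos_of_pos hN0 _
      have hinv : (N : ℝ) ^ (-(2 : ℝ) / 3) = ((N : ℝ) ^ ((2 : ℝ) / 3))⁻¹ := by
        rw [← Real.rpow_neg hN0.le]; norm_num
      rw [hinv, ← div_eq_mul_inv, le_div_iff₀ hpos]
      exact hb
    | succ n hn ih =>
      have hn1 : 1 ≤ n := le_trans hN1 hn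
      have hn0 : (0 : ℝ) < n := by exact_mod_cast hn1
      have hξn := hξ_nonneg n hn1
      have hA : (0 : ℝ) < (n : ℝ) ^ (-(2 : ℝ) / 3) := Real.rpow_pos_of_pos hn0 _
      have hB : (0 : ℝ) < (n : ℝ) ^ (-(5 : ℝ) / 3) := Real.rpow_pos_of_pos hn0 _
      have hne : C₂ ≤ 2 * e * n := by
        have : C₂ / (2 * e) ≤ (n : ℝ) := hNC.trans (by exact_mod_cast hn)
        rw [div_le_iff₀ (by positivity)] at this; linarith
      have hqlow : (κ + 1 / 3) * (n : ℝ)⁻¹ ≤ q n := by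
        rw [hq n hn1]
        have hc : κ + 1 / 3 ≤ 2 * κ - C₂ / (2 * (n : ℝ)) := by
          have h' : C₂ / (2 * (n : ℝ)) ≤ κ - 1 / 3 := by
            rw [div_le_iff₀ (by positivity)]
            simp only [he] at hne
            linarith
          linarith
        calc (κ + 1 / 3) * (n : ℝ)⁻¹
            ≤ (2 * κ - C₂ / (2 * (n : ℝ))) * (n : ℝ)⁻¹ :=
              mul_le_mul_of_nonneg_right hc (by positivity)
          _ = 1 / (n : ℝ) * (2 * κ - C₂ / (2 * (n : ℝ))) := by rw [one_div]; ring
      have h1q : 0 ≤ 1 - q n := by linarith [hq_le_one n hn1]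
      have hsqrt : Real.sqrt (ξ n) ≤ Real.sqrt M * (n : ℝ) ^ (-(1 : ℝ) / 3) := by
        have h1 : Real.sqrt (ξ n) ≤ Real.sqrt (M * (n : ℝ) ^ (-(2 : ℝ) / 3)) :=
          Real.sqrt_le_sqrt ih
        have h2 : Real.sqrt (M * (n : ℝ) ^ (-(2 : ℝ) / 3))
            = Real.sqrt M * Real.sqrt ((n : ℝ) ^ (-(2 : ℝ) / 3)) :=
          Real.sqrt_mul hM0.le _
        have h3 : Real.sqrt ((n : ℝ) ^ (-(2 : ℝ) / 3)) = (n : ℝ) ^ (-(1 : ℝ) / 3) := by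
          rw [Real.sqrt_eq_rpow, ← Real.rpow_mul hn0.le]
          norm_num
        rw [h2, h3] at h1
        exact h1
      have h45 : (n : ℝ) ^ (-(4 : ℝ) / 3) * (n : ℝ) ^ (-(1 : ℝ) / 3)
          = (n : ℝ) ^ (-(5 : ℝ) / 3) := by
        rw [← Real.rpow_add hn0]; norm_num
      have h25 : (n : ℝ)⁻¹ * (n : ℝ) ^ (-(2 : ℝ) / 3) = (n : ℝ) ^ (-(5 : ℝ) / 3) := by
        rw [← Real.rpow_neg_one, ← Real.rpow_add hn0]; norm_num
      have I1 := hrec n hn1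
      have I2 : (1 - q n) * ξ n ≤ (1 - q n) * (M * (n : ℝ) ^ (-(2 : ℝ) / 3)) :=
        mul_le_mul_of_nonneg_left ih h1q
      have I3 : (κ + 1 / 3) * M * (n : ℝ) ^ (-(5 : ℝ) / 3)
          ≤ q n * (M * (n : ℝ) ^ (-(2 : ℝ) / 3)) := by
        calc (κ + 1 / 3) * M * (n : ℝ) ^ (-(5 : ℝ) / 3)
            = (κ + 1 / 3) * (n : ℝ)⁻¹ * (M * (n : ℝ) ^ (-(2 : ℝ) / 3)) := by
              rw [← h25]; ring
          _ ≤ q n * (M * (n : ℝ) ^ (-(2 : ℝ) / 3)) :=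
              mul_le_mul_of_nonneg_right hqlow (by positivity)
      have I4 : Cu * (n : ℝ) ^ (-(4 : ℝ) / 3) * Real.sqrt (ξ n)
          ≤ Cu * Real.sqrt M * (n : ℝ) ^ (-(5 : ℝ) / 3) := by
        calc Cu * (n : ℝ) ^ (-(4 : ℝ) / 3) * Real.sqrt (ξ n)
            ≤ Cu * (n : ℝ) ^ (-(4 : ℝ) / 3) * (Real.sqrt M * (n : ℝ) ^ (-(1 : ℝ) / 3)) :=
              mul_le_mul_of_nonneg_left hsqrt (by positivity)
          _ = Cu * Real.sqrt M * ((n : ℝ) ^ (-(4 : ℝ) / 3) * (n : ℝ) ^ (-(1 : ℝ) / 3)) := by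
              ring
          _ = Cu * Real.sqrt M * (n : ℝ) ^ (-(5 : ℝ) / 3) := by rw [h45]
      have I5 : (Cu * Real.sqrt M + v) * (n : ℝ) ^ (-(5 : ℝ) / 3)
          ≤ e * M * (n : ℝ) ^ (-(5 : ℝ) / 3) :=
        mul_le_mul_of_nonneg_right hkey hB.le
      have I6 : M * (n : ℝ) ^ (-(2 : ℝ) / 3)
            - (2 / 3) * (M * (n : ℝ) ^ (-(5 : ℝ) / 3))
          ≤ M * ((n : ℝ) + 1) ^ (-(2 : ℝ) / 3) := by
        calc M * (n : ℝ) ^ (-(2 : ℝ) / 3) - (2 / 3) * (M * (n : ℝ) ^ (-(5 : ℝ) / 3))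
            = M * ((n : ℝ) ^ (-(2 : ℝ) / 3) - (2 / 3) * (n : ℝ) ^ (-(5 : ℝ) / 3)) := by ring
          _ ≤ M * ((n : ℝ) + 1) ^ (-(2 : ℝ) / 3) :=
              mul_le_mul_of_nonneg_left (kw_step_aux n hn1) hM0.le
      have E1 : (1 - q n) * (M * (n : ℝ) ^ (-(2 : ℝ) / 3))
          = M * (n : ℝ) ^ (-(2 : ℝ) / 3) - q n * (M * (n : ℝ) ^ (-(2 : ℝ) / 3)) := by ring
      have E2 : (Cu * Real.sqrt M + v) * (n : ℝ) ^ (-(5 : ℝ) / 3)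
          = Cu * Real.sqrt M * (n : ℝ) ^ (-(5 : ℝ) / 3) + v * (n : ℝ) ^ (-(5 : ℝ) / 3) := by
        ring
      have E3 : e * M * (n : ℝ) ^ (-(5 : ℝ) / 3)
          = (κ + 1 / 3) * M * (n : ℝ) ^ (-(5 : ℝ) / 3)
            - (2 / 3) * (M * (n : ℝ) ^ (-(5 : ℝ) / 3)) := by
        simp only [he]; ring
      have hgoal : ξ (n + 1) ≤ M * ((n : ℝ) + 1) ^ (-(2 : ℝ) / 3) := by
        linarith
      have hcast : ((n + 1 : ℕ) : ℝ) = (n : ℝ) + 1 := by push_cast; ring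
      rw [hcast]
      exact hgoal
  refine ⟨M, ?_⟩
  filter_upwards [eventually_ge_atTop N] with n hn
  have h := main n hn
  have hn0 : (0 : ℝ) < n := by exact_mod_cast le_trans hN1 hn
  calc (n : ℝ) ^ ((2 : ℝ) / 3) * ξ n
      ≤ (n : ℝ) ^ ((2 : ℝ) / 3) * (M * (n : ℝ) ^ (-(2 : ℝ) / 3)) :=
        mul_le_mul_of_nonneg_left h (by positivity)
    _ = M * ((n : ℝ) ^ ((2 : ℝ) / 3) * (n : ℝ) ^ (-(2 : ℝ) / 3)) := by ring
    _ = M := by rw [← Real.rpow_add hn0]; norm_num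
end

section
/- Let f : ℝ → ℝ be differentiable with Lipschitz derivative f′, and suppose there exist L > 0 and r > 0 such that f′(θ) > r for all θ > L and f′(θ) < −r for all θ < −L. Let (a_n) be a positive nonincreasing sequence with a_n → 0, let N ∈ ℕ, and let (e_n) be a real sequence with |e_n| ≤ r/2 for all n ≥ N. Let (θ_n) be a real sequence satisfying θ_{n+1} = θ_n − a_n (f′(θ_n) + e_n) for all n. Then the sequence (θ_n) is bounded: sup_n |θ_n| < ∞. -/
open Filter

/-- Boundedness of the perturbed gradient recursion: when the error terms are
eventually bounded by `r/2` and `f'` has drift `r` outside `[−L, L]`, the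
iterates remain bounded. -/
theorem perturbed_gradient_iterates_bounded
    (f f' : ℝ → ℝ)
    (hderiv : ∀ x, HasDerivAt f (f' x) x)
    (hLip : ∃ K : NNReal, LipschitzWith K f')
    (L r : ℝ) (hL : 0 < L) (hr : 0 < r)
    (hdrift_pos : ∀ θ, L < θ → r < f' θ)
    (hdrift_neg : ∀ θ, θ < -L → f' θ < -r)
    (a : ℕ → ℝ) (ha_pos : ∀ n, 0 < a n) (ha_anti : Antitone a)
    (ha_lim : Tendsto a atTop (nhds 0))
    (N : ℕ) (e : ℕ → ℝ) (he : ∀ n, N ≤ n → |e n| ≤ r / 2)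
    (θseq : ℕ → ℝ)
    (hrec : ∀ n, θseq (n + 1) = θseq n - a n * (f' (θseq n) + e n)) :
    ∃ B : ℝ, ∀ n, |θseq n| ≤ B := by
  obtain ⟨Knn, hLip⟩ := hLip
  obtain ⟨K, hKdef⟩ : ∃ K : ℝ, K = (Knn : ℝ) := ⟨_, rfl⟩
  have hK0 : (0:ℝ) ≤ K := hKdef ▸ Knn.coe_nonneg
  -- linear growth bound on f'
  have hfb : ∀ x : ℝ, |f' x| ≤ |f' 0| + K * |x| := by
    intro x
    have h1 := hLip.dist_le_mul x 0
    rw [Real.dist_eq, Real.dist_eq, sub_zero, ← hKdef] at h1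
    have h2 := abs_sub_abs_le_abs_sub (f' x) (f' 0)
    linarith
  obtain ⟨c, hcdef⟩ : ∃ c : ℝ, c = |f' 0| + r / 2 := ⟨_, rfl⟩
  have hc0 : 0 < c := by
    have : (0:ℝ) ≤ |f' 0| := abs_nonneg _
    rw [hcdef]; linarith
  obtain ⟨δ, hδdef⟩ : ∃ d : ℝ, d = 1 / (2 * K + 1) := ⟨_, rfl⟩
  have h2K : (0:ℝ) < 2 * K + 1 := by linarith
  have hδ : 0 < δ := by rw [hδdef]; positivity
  have hδK : δ * K ≤ 1 / 2 := by
    rw [hδdef, div_mul_eq_mul_div, one_mul, div_le_div_iff₀ h2K two_pos]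
    linarith
  obtain ⟨M₀, hM₀⟩ := eventually_atTop.mp (ha_lim.eventually (gt_mem_nhds hδ))
  obtain ⟨M, hMdef⟩ : ∃ M : ℕ, M = max M₀ N := ⟨_, rfl⟩
  have haδ : ∀ n, M ≤ n → a n ≤ δ := fun n hn =>
    le_of_lt (hM₀ n (le_trans (hMdef ▸ le_max_left _ _) hn))
  have heM : ∀ n, M ≤ n → |e n| ≤ r / 2 := fun n hn =>
    he n (le_trans (hMdef ▸ le_max_right _ _) hn)
  obtain ⟨B, hBdef⟩ : ∃ B : ℝ, B = |θseq M| + 2 * L + 2 * δ * c := ⟨_, rfl⟩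
  have hθM0 : (0:ℝ) ≤ |θseq M| := abs_nonneg _
  have hδc : 0 ≤ δ * c := mul_nonneg hδ.le hc0.le
  have hB0 : 0 < B := by rw [hBdef]; linarith
  -- uniform step size bound
  have hSB : δ * (K * B + c) ≤ B := by
    have h1 : δ * K * B ≤ (1/2) * B := mul_le_mul_of_nonneg_right hδK hB0.le
    have h2 : 2 * δ * c ≤ B := by rw [hBdef]; linarith
    nlinarith
  have hLSB : L + δ * (K * B + c) ≤ B := by
    have h1 : δ * K * B ≤ (1/2) * B := mul_le_mul_of_nonneg_right hδK hB0.le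
    nlinarith [hBdef]
  have key : ∀ n, M ≤ n → |θseq n| ≤ B := by
    intro n hn
    induction n, hn using Nat.le_induction with
    | base => rw [hBdef]; linarith
    | succ n hn ih =>
      have hae := haδ n hn
      have han := ha_pos n
      have hee := heM n hn
      have hfbn := hfb (θseq n)
      obtain ⟨h1, h2⟩ := abs_le.mp ih
      obtain ⟨he1, he2⟩ := abs_le.mp hee
      -- the step is bounded by δ*(K*B + c)
      have hstep : |a n * (f' (θseq n) + e n)| ≤ δ * (K * B + c) := by
        rw [abs_mul, abs_of_pos han]
        have hsum : |f' (θseq n) + e n| ≤ K * B + c := by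
          have h3 := abs_add_le (f' (θseq n)) (e n)
          have h4 : K * |θseq n| ≤ K * B := mul_le_mul_of_nonneg_left ih hK0
          linarith [hcdef.ge, hcdef.le]
        exact mul_le_mul hae hsum (abs_nonneg _) hδ.le
      obtain ⟨hs1, hs2⟩ := abs_le.mp hstep
      rw [hrec n, abs_le]
      rcases le_or_gt (θseq n) L with hcase | hcase
      · rcases le_or_gt (-L) (θseq n) with hcase2 | hcase2
        · -- |θseq n| ≤ L
          constructor <;> linarith
        · -- θseq n < -L : drift pushes up
          have hdr := hdrift_neg _ hcase2
          have hpos : 0 < -(f' (θseq n) + e n) := by linarith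
          have hprod : 0 < a n * -(f' (θseq n) + e n) := mul_pos han hpos
          constructor
          · nlinarith
          · linarith
      · -- L < θseq n : drift pushes down
        have hdr := hdrift_pos _ hcase
        have hpos : 0 < f' (θseq n) + e n := by linarith
        have hprod : 0 < a n * (f' (θseq n) + e n) := mul_pos han hpos
        constructor
        · linarith
        · linarith
  -- combine with the finitely many initial terms
  set C : ℝ := (Finset.range (M + 1)).sup' ⟨0, by simp⟩ fun n => |θseq n| with hCdef
  refine ⟨max B C, fun n => ?_⟩
  rcases le_or_gt M n with hn | hn
  · exact le_trans (key n hn) (le_max_left _ _)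
  · refine le_trans ?_ (le_max_right _ _)
    exact Finset.le_sup' (f := fun n => |θseq n|)
      (Finset.mem_range.mpr (by omega))
end

section
/- Let S be a nonempty finite type with cardinality N, and let P : ℝ → Matrix S S ℝ be a family of matrices such that: every entry θ ↦ P(θ)_{ij} is infinitely differentiable (C^∞) in θ; for every θ, P(θ) is row-stochastic (all entries nonnegative, each row sums to 1); and for every θ, the rank of (I − P(θ)) equals N − 1, where I is the identity matrix. Then there exists an infinitely differentiable map m : ℝ → (S → ℝ) such that for every θ: m(θ) has nonnegative entries summing to 1, and ∑_{i ∈ S} m(θ)_i P(θ)_{ij} = m(θ)_j for every j ∈ S; moreover, for each θ, m(θ) is the unique probability vector with this stationarity property. -/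
open Matrix Module

private lemma contDiff_finset_prod' {ι : Type*} (s : Finset ι) (f : ι → ℝ → ℝ)
    (h : ∀ i ∈ s, ContDiff ℝ (⊤ : ℕ∞) (f i)) :
    ContDiff ℝ (⊤ : ℕ∞) (fun θ => ∏ i ∈ s, f i θ) := by
  classical
  induction s using Finset.induction_on with
  | empty => simpa using contDiff_const
  | insert _ _ hni ih =>
    rename_i a s
    simp only [Finset.prod_insert hni]
    exact (h a (Finset.mem_insert_self a s)).mul
      (ih fun i hi => h i (Finset.mem_insert_of_mem hi))

private lemma contDiff_det' {S : Type*} [Fintype S] [DecidableEq S]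
    (A : ℝ → Matrix S S ℝ) (h : ∀ i j, ContDiff ℝ (⊤ : ℕ∞) (fun θ => A θ i j)) :
    ContDiff ℝ (⊤ : ℕ∞) (fun θ => (A θ).det) := by
  simp only [Matrix.det_apply]
  apply ContDiff.sum
  intro σ _
  have : ContDiff ℝ (⊤ : ℕ∞) (fun θ => ∏ i, A θ (σ i) i) :=
    contDiff_finset_prod' _ _ (fun i _ => h (σ i) i)
  simp only [Units.smul_def, zsmul_eq_mul]
  exact contDiff_const.mul this



/-- Smooth dependence of the stationary distribution on a parameter: if
`θ ↦ P(θ)` is a `C^∞` family of row-stochastic matrices on a finite state space of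
cardinality `N` with `rank (I − P(θ)) = N − 1` for all `θ`, then there is a `C^∞`
map `θ ↦ m(θ)` such that `m(θ)` is, for each `θ`, the unique stationary probability
vector of `P(θ)`. -/
theorem stationary_distribution_smooth
    {S : Type*} [Fintype S] [Nonempty S] [DecidableEq S]
    (N : ℕ) (hcard : Fintype.card S = N)
    (P : ℝ → Matrix S S ℝ)
    (hsmooth : ∀ i j, ContDiff ℝ (⊤ : ℕ∞) (fun θ => P θ i j))
    (hnonneg : ∀ θ i j, 0 ≤ P θ i j)
    (hrow : ∀ θ i, ∑ j, P θ i j = 1)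
    (hrank : ∀ θ, (1 - P θ).rank = N - 1) :
    ∃ m : ℝ → S → ℝ,
      ContDiff ℝ (⊤ : ℕ∞) m ∧
      (∀ θ,
        (∀ i, 0 ≤ m θ i) ∧ (∑ i, m θ i = 1) ∧
        (∀ j, ∑ i, m θ i * P θ i j = m θ j)) ∧
      (∀ θ (v : S → ℝ),
        (∀ i, 0 ≤ v i) → (∑ i, v i = 1) →
        (∀ j, ∑ i, v i * P θ i j = v j) → v = m θ) := by
  classical
  have hN : 0 < N := hcard ▸ Fintype.card_pos
  -- the entrywise formula for `(1 - P θ)ᵀ *ᵥ x`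
  have hmv : ∀ (θ : ℝ) (x : S → ℝ) (j : S),
      ((1 - P θ)ᵀ).mulVec x j = x j - ∑ i, x i * P θ i j := by
    intro θ x j
    have h1 : ((1 - P θ)ᵀ).mulVec x j = ∑ i, ((if i = j then (1:ℝ) else 0) - P θ i j) * x i := by
      simp [Matrix.mulVec, dotProduct, Matrix.one_apply]
    rw [h1]
    rw [show (∑ i, ((if i = j then (1:ℝ) else 0) - P θ i j) * x i)
        = (∑ i, (if i = j then x i else 0)) - ∑ i, x i * P θ i j by
      rw [← Finset.sum_sub_distrib]
      exact Finset.sum_congr rfl fun i _ => by by_cases h : i = j <;> simp [h] <;> ring]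
    simp
  -- the kernel of `(1 - P θ)ᵀ` is one-dimensional
  have hker1 : ∀ θ, finrank ℝ (LinearMap.ker ((1 - P θ)ᵀ).mulVecLin) = 1 := by
    intro θ
    have h1 := LinearMap.finrank_range_add_finrank_ker ((1 - P θ)ᵀ).mulVecLin
    have h2 : finrank ℝ (LinearMap.range ((1 - P θ)ᵀ).mulVecLin) = N - 1 := by
      have h3 : ((1 - P θ)ᵀ).rank = N - 1 := by rw [Matrix.rank_transpose, hrank θ]
      simpa [Matrix.rank] using h3
    have h4 : finrank ℝ (S → ℝ) = N := by
      simp [finrank_pi, hcard]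
    rw [h2, h4] at h1
    omega
  -- stationarity iff kernel membership
  have hstat_mem : ∀ (θ : ℝ) (x : S → ℝ),
      (∀ j, ∑ i, x i * P θ i j = x j) ↔ ((1 - P θ)ᵀ).mulVec x = 0 := by
    intro θ x
    constructor
    · intro h; funext j; rw [hmv, h j, sub_self]; rfl
    · intro h j
      have := congrFun h j
      rw [hmv] at this
      have : x j - ∑ i, x i * P θ i j = 0 := this
      linarith
  -- existence of a nonnegative stationary probability vector
  have hex : ∀ θ, ∃ y : S → ℝ,
      (∀ i, 0 ≤ y i) ∧ (∑ i, y i = 1) ∧ (∀ j, ∑ i, y i * P θ i j = y j) := by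
    intro θ
    obtain ⟨x, hxker, hx0⟩ : ∃ x ∈ LinearMap.ker ((1 - P θ)ᵀ).mulVecLin, x ≠ 0 := by
      rw [← Submodule.ne_bot_iff]
      intro hbot
      have := hker1 θ
      rw [hbot, finrank_bot] at this
      exact absurd this (by norm_num)
    have hxstat : ∀ j, ∑ i, x i * P θ i j = x j := by
      refine (hstat_mem θ x).2 ?_
      simpa only [Matrix.mulVecLin_apply] using (LinearMap.mem_ker.1 hxker)
    set y0 : S → ℝ := fun i => |x i| with hy0
    have hle : ∀ j, y0 j ≤ ∑ i, y0 i * P θ i j := by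
      intro j
      calc y0 j = |∑ i, x i * P θ i j| := by rw [hxstat j]
        _ ≤ ∑ i, |x i * P θ i j| := Finset.abs_sum_le_sum_abs _ _
        _ = ∑ i, y0 i * P θ i j := by
            refine Finset.sum_congr rfl fun i _ => ?_
            rw [abs_mul, abs_of_nonneg (hnonneg θ i j)]
    have hsumeq : ∑ j, (∑ i, y0 i * P θ i j) = ∑ j, y0 j := by
      rw [Finset.sum_comm]
      refine Finset.sum_congr rfl fun i _ => ?_
      rw [← Finset.mul_sum, hrow θ i, mul_one]
    have hzero : ∀ j ∈ Finset.univ, (∑ i, y0 i * P θ i j) - y0 j = 0 := by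
      have hs : ∑ j, ((∑ i, y0 i * P θ i j) - y0 j) = 0 := by
        rw [Finset.sum_sub_distrib, hsumeq, sub_self]
      exact fun j hj =>
        (Finset.sum_eq_zero_iff_of_nonneg (fun j _ => sub_nonneg.2 (hle j))).1 hs j hj
    have hy0stat : ∀ j, ∑ i, y0 i * P θ i j = y0 j :=
      fun j => sub_eq_zero.1 (hzero j (Finset.mem_univ j))
    have hspos : 0 < ∑ i, y0 i := by
      obtain ⟨i, hi⟩ : ∃ i, x i ≠ 0 := Function.ne_iff.1 hx0
      exact Finset.sum_pos' (fun i _ => abs_nonneg _) ⟨i, Finset.mem_univ i, abs_pos.2 hi⟩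
    refine ⟨fun i => (∑ k, y0 k)⁻¹ * y0 i,
      fun i => mul_nonneg (inv_nonneg.2 hspos.le) (abs_nonneg _), ?_, ?_⟩
    · rw [← Finset.mul_sum, inv_mul_cancel₀ hspos.ne']
    · intro j
      simp_rw [mul_assoc, ← Finset.mul_sum]
      rw [hy0stat j]
  -- kernel elements with zero coordinate-sum vanish
  have hker0 : ∀ (θ : ℝ) (y : S → ℝ),
      ((1 - P θ)ᵀ).mulVec y = 0 → (∑ i, y i) = 0 → y = 0 := by
    intro θ y hy hsum
    obtain ⟨m₀, hm0nn, hm0sum, hm0stat⟩ := hex θ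
    have hm0ker : m₀ ∈ LinearMap.ker ((1 - P θ)ᵀ).mulVecLin := by
      rw [LinearMap.mem_ker, Matrix.mulVecLin_apply]
      exact (hstat_mem θ m₀).1 hm0stat
    have hm0ne : m₀ ≠ 0 := by
      intro h
      rw [h] at hm0sum
      simp at hm0sum
    have hspan : LinearMap.ker ((1 - P θ)ᵀ).mulVecLin = Submodule.span ℝ {m₀} := by
      symm
      apply Submodule.eq_of_le_of_finrank_eq
      · rwa [Submodule.span_le, Set.singleton_subset_iff]
      · rw [finrank_span_singleton hm0ne, hker1 θ]
    have hyker : y ∈ Submodule.span ℝ {m₀} := by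
      rw [← hspan, LinearMap.mem_ker, Matrix.mulVecLin_apply]
      exact hy
    obtain ⟨c, hc⟩ := Submodule.mem_span_singleton.1 hyker
    have hc0 : c = 0 := by
      have h1 : ∑ i, (c • m₀) i = 0 := by rw [hc, hsum]
      simp only [Pi.smul_apply, smul_eq_mul, ← Finset.mul_sum, hm0sum, mul_one] at h1
      exact h1
    rw [← hc, hc0, zero_smul]
  -- the auxiliary matrix `B θ`
  set B : ℝ → Matrix S S ℝ := fun θ => (1 - P θ)ᵀ + Matrix.of (fun _ _ => (1:ℝ)) with hBdef
  have hBmv : ∀ (θ : ℝ) (y : S → ℝ) (j : S),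
      (B θ).mulVec y j = ((1 - P θ)ᵀ).mulVec y j + ∑ i, y i := by
    intro θ y j
    rw [hBdef]
    simp only [Matrix.add_mulVec, Pi.add_apply]
    congr 1
    simp [Matrix.mulVec, dotProduct]
  have hsum_mv : ∀ (θ : ℝ) (y : S → ℝ), ∑ j, ((1 - P θ)ᵀ).mulVec y j = 0 := by
    intro θ y
    simp_rw [hmv]
    rw [Finset.sum_sub_distrib, Finset.sum_comm]
    simp_rw [← Finset.mul_sum, hrow, mul_one]
    exact sub_self _
  -- from `B θ *ᵥ y = c` constant we can extract the coordinate sum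
  have hBsum : ∀ (θ : ℝ) (y : S → ℝ), (N : ℝ) * ∑ i, y i = ∑ j, (B θ).mulVec y j := by
    intro θ y
    rw [Finset.sum_congr rfl fun j _ => hBmv θ y j, Finset.sum_add_distrib, hsum_mv θ y,
      zero_add, Finset.sum_const, Finset.card_univ, hcard, nsmul_eq_mul]
  have hNne : (N : ℝ) ≠ 0 := Nat.cast_ne_zero.2 hN.ne'
  -- injectivity of `B θ`
  have hBinj : ∀ θ, Function.Injective ((B θ).mulVec) := by
    intro θ
    have hz : ∀ y, (B θ).mulVec y = 0 → y = 0 := by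
      intro y hy
      have hsum0 : ∑ i, y i = 0 := by
        have h2 := hBsum θ y
        rw [hy] at h2
        simp only [Pi.zero_apply, Finset.sum_const_zero] at h2
        exact (mul_eq_zero.1 h2).resolve_left hNne
      have hkmem : ((1 - P θ)ᵀ).mulVec y = 0 := by
        funext j
        have h3 := hBmv θ y j
        rw [hy, hsum0] at h3
        simpa using h3.symm
      exact hker0 θ y hkmem hsum0
    intro a b hab
    have : (B θ).mulVec (a - b) = 0 := by
      rw [Matrix.mulVec_sub, hab, sub_self]
    have := hz _ this
    exact sub_eq_zero.1 this
  have hBdet : ∀ θ, IsUnit (B θ).det := fun θ =>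
    (Matrix.isUnit_iff_isUnit_det _).1 (Matrix.mulVec_injective_iff_isUnit.1 (hBinj θ))
  -- characterization: stationary probability vectors solve `B θ *ᵥ v = 1`
  have hBones : ∀ (θ : ℝ) (v : S → ℝ),
      ((∑ i, v i = 1) ∧ ∀ j, ∑ i, v i * P θ i j = v j) ↔
        (B θ).mulVec v = (fun _ => 1) := by
    intro θ v
    constructor
    · rintro ⟨hs, hst⟩
      funext j
      rw [hBmv, hmv, hst j, sub_self, zero_add, hs]
    · intro h
      have hsum1 : ∑ i, v i = 1 := by
        have h2 := hBsum θ v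
        rw [h] at h2
        simp only [Finset.sum_const, Finset.card_univ, hcard, nsmul_eq_mul, mul_one] at h2
        exact mul_left_cancel₀ hNne (by rw [h2, mul_one])
      refine ⟨hsum1, fun j => ?_⟩
      have h3 := hBmv θ v j
      rw [h, hmv, hsum1] at h3
      have : (1:ℝ) = v j - ∑ i, v i * P θ i j + 1 := h3
      linarith
  -- the stationary distribution
  refine ⟨fun θ => (B θ)⁻¹.mulVec (fun _ => 1), ?_, ?_, ?_⟩
  · -- smoothness
    have hBsm : ∀ i j, ContDiff ℝ (⊤ : ℕ∞) (fun θ => B θ i j) := by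
      intro i j
      have : (fun θ => B θ i j) = fun θ => (1 : Matrix S S ℝ) j i - P θ j i + 1 := by
        funext θ
        rw [hBdef]
        simp [Matrix.transpose_apply, Matrix.one_apply, eq_comm]
      rw [this]
      exact (contDiff_const.sub (hsmooth j i)).add contDiff_const
    have hdet_sm : ContDiff ℝ (⊤ : ℕ∞) (fun θ => (B θ).det) := contDiff_det' B hBsm
    have hdet_ne : ∀ θ, (B θ).det ≠ 0 := fun θ => (hBdet θ).ne_zero
    have hadj_sm : ∀ i j, ContDiff ℝ (⊤ : ℕ∞) (fun θ => (B θ).adjugate i j) := by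
      intro i j
      simp_rw [Matrix.adjugate_apply]
      apply contDiff_det'
      intro a b
      by_cases haj : a = j
      · simp only [Matrix.updateRow_apply, haj, if_true]
        exact contDiff_const
      · simp only [Matrix.updateRow_apply, haj, if_false]
        exact hBsm a b
    rw [contDiff_pi]
    intro j
    have hrepr : (fun θ => (B θ)⁻¹.mulVec (fun _ => (1:ℝ)) j)
        = fun θ => ∑ i, ((B θ).det)⁻¹ * (B θ).adjugate j i := by
      funext θ
      simp [Matrix.inv_def, Matrix.mulVec, dotProduct, Ring.inverse_eq_inv,
        Matrix.smul_apply, smul_eq_mul]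
    rw [hrepr]
    exact ContDiff.sum fun i _ => (hdet_sm.inv hdet_ne).mul (hadj_sm j i)
  · -- properties
    intro θ
    obtain ⟨y, hynn, hysum, hystat⟩ := hex θ
    have hBy : (B θ).mulVec y = fun _ => 1 := (hBones θ y).1 ⟨hysum, hystat⟩
    have hBm : (B θ).mulVec ((B θ)⁻¹.mulVec (fun _ => 1)) = fun _ => 1 := by
      rw [Matrix.mulVec_mulVec, Matrix.mul_nonsing_inv _ (hBdet θ), Matrix.one_mulVec]
    have hym : y = (B θ)⁻¹.mulVec (fun _ => 1) := hBinj θ (by rw [hBy, hBm])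
    show (∀ i, 0 ≤ (B θ)⁻¹.mulVec (fun _ => 1) i) ∧
      (∑ i, (B θ)⁻¹.mulVec (fun _ => 1) i = 1) ∧
      (∀ j, ∑ i, (B θ)⁻¹.mulVec (fun _ => 1) i * P θ i j = (B θ)⁻¹.mulVec (fun _ => 1) j)
    rw [← hym]
    exact ⟨hynn, hysum, hystat⟩
  · -- uniqueness
    intro θ v _ hvsum hvstat
    have hBv : (B θ).mulVec v = fun _ => 1 := (hBones θ v).1 ⟨hvsum, hvstat⟩
    have hBm : (B θ).mulVec ((B θ)⁻¹.mulVec (fun _ => 1)) = fun _ => 1 := by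
      rw [Matrix.mulVec_mulVec, Matrix.mul_nonsing_inv _ (hBdet θ), Matrix.one_mulVec]
    exact hBinj θ (by rw [hBv, hBm])
end

section
/- Let ε > 0 and M > 2ε, and let θ* ∈ (ε, M − ε). For real numbers a < b let ψ_{a,b} : ℝ → ℝ be defined by ψ_{a,b}(x) = 0 if x ≤ a, ψ_{a,b}(x) = exp(−(b − x)²/(x − a)) if a < x ≤ b, and ψ_{a,b}(x) = 1 if x > b. Define the penalty function b : ℝ → ℝ by b(θ) = (1 − ψ_{0,ε}(θ)) (θ − ε)² + ψ_{M−ε,M}(θ) (θ − M + ε)². Then there exist constants C₂ > 0 and ε₀ > 0 such that for every θ ∈ ℝ and every e with 0 < e < ε₀, |b(θ + e) − b(θ − e)| ≤ C₂ |θ − θ*| e. -/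
/-- The smooth step transition function `ψ_{a,b}`. -/
noncomputable def psiStep (a b : ℝ) (x : ℝ) : ℝ :=
  if x ≤ a then 0
  else if x ≤ b then Real.exp (-(b - x) ^ 2 / (x - a))
  else 1

/-- The quadratic penalty function
`b(θ) = (1 − ψ_{0,ε}(θ)) (θ − ε)² + ψ_{M−ε,M}(θ) (θ − M + ε)²`. -/
noncomputable def penalty (ε M : ℝ) (θ : ℝ) : ℝ :=
  (1 - psiStep 0 ε θ) * (θ - ε) ^ 2 + psiStep (M - ε) M θ * (θ - M + ε) ^ 2

/-!
Each transition `ψ_{a,b}` is locally Lipschitz: left of `b` it equals the smooth function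
`e^{-1/u}` with `u(x) = (x - a) / (b - x)²`, and right of `a` it is a smooth function of
`min x b`. The penalty is a polynomial in `θ`, `ψ_{0,ε}(θ)` and `ψ_{M-ε,M}(θ)`, hence Lipschitz
on compact intervals; this gives the bound at distance `≥ d / 2` from `θ*`, where
`d = min (θ* - ε) (M - ε - θ*)`. Closer to `θ*`, both `θ ± e` lie in `(ε, M - ε]`, where the
penalty vanishes. Beyond the transition zones the penalty is `(θ - c)²` with `c ∈ {ε, M - ε}`
lying between `θ` and `θ*`, whose symmetric difference is `4 e (θ - c)`.
-/

open Filter Set Topology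

theorem Filter.EventuallyEq.exists_lipschitzOnWith {α β : Type*} [PseudoEMetricSpace α]
    [PseudoEMetricSpace β] {f g : α → β} {x : α} (hfg : f =ᶠ[𝓝 x] g)
    (hg : ∃ K, ∃ t ∈ 𝓝 x, LipschitzOnWith K g t) :
    ∃ K, ∃ t ∈ 𝓝 x, LipschitzOnWith K f t := by
  obtain ⟨K, t, ht, hgt⟩ := hg
  refine ⟨K, t ∩ {y | f y = g y}, inter_mem ht hfg, fun y hy z hz => ?_⟩
  rw [hy.2, hz.2]
  exact hgt hy.1 hz.1

theorem LipschitzOnWith.abs_sub_le_two_mul {f : ℝ → ℝ} {K : NNReal} {s : Set ℝ}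
    (hf : LipschitzOnWith K f s) {θ e : ℝ} (he : 0 ≤ e) (h₁ : θ + e ∈ s) (h₂ : θ - e ∈ s) :
    |f (θ + e) - f (θ - e)| ≤ 2 * K * e := by
  have h := hf.dist_le_mul (θ + e) h₁ (θ - e) h₂
  rw [Real.dist_eq, Real.dist_eq, add_sub_sub_cancel, abs_of_nonneg (by positivity : 0 ≤ e + e)]
    at h
  linarith

section psiStep

variable {a b x : ℝ}

theorem psiStep_of_le (h : x ≤ a) : psiStep a b x = 0 := if_pos h

theorem psiStep_of_lt (hab : a ≤ b) (h : b < x) : psiStep a b x = 1 := by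
  rw [psiStep, if_neg (by linarith), if_neg h.not_ge]

theorem psiStep_eq_expNegInvGlue (hx : x < b) :
    psiStep a b x = expNegInvGlue ((x - a) / (b - x) ^ 2) := by
  unfold psiStep
  split_ifs with hxa hxb
  · exact (expNegInvGlue.zero_of_nonpos (div_nonpos_of_nonpos_of_nonneg (by linarith)
      (sq_nonneg _))).symm
  · have hu : 0 < (x - a) / (b - x) ^ 2 := div_pos (by linarith) (by nlinarith)
    rw [expNegInvGlue, if_neg hu.not_ge, inv_div, neg_div]
  · exact absurd hx.le hxb

theorem psiStep_eq_exp_min (hx : a < x) :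
    psiStep a b x = Real.exp (-(b - min x b) ^ 2 / (min x b - a)) := by
  unfold psiStep
  rcases le_or_gt x b with hxb | hxb
  · rw [if_neg hx.not_ge, if_pos hxb, min_eq_left hxb]
  · rw [if_neg hx.not_ge, if_neg hxb.not_ge, min_eq_right hxb.le]
    simp

theorem psiStep_locallyLipschitz (hab : a < b) : LocallyLipschitz (psiStep a b) := by
  intro x
  rcases lt_or_ge x b with hxb | hbx
  · refine Filter.EventuallyEq.exists_lipschitzOnWith
      (eventually_of_mem (Iio_mem_nhds hxb) fun y hy => psiStep_eq_expNegInvGlue hy) ?_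
    refine ContDiffAt.exists_lipschitzOnWith (𝕂 := ℝ) ?_
    exact expNegInvGlue.contDiff.contDiffAt.comp x
      (ContDiffAt.div (by fun_prop) (by fun_prop) (by exact (pow_pos (sub_pos.2 hxb) 2).ne'))
  · have hax : a < x := hab.trans_le hbx
    refine Filter.EventuallyEq.exists_lipschitzOnWith
      (eventually_of_mem (Ioi_mem_nhds hax) fun y hy => psiStep_eq_exp_min hy) ?_
    have hmin : a < min x b := lt_min hax hab
    obtain ⟨K, t, ht, hF⟩ := ContDiffAt.exists_lipschitzOnWith (𝕂 := ℝ)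
      (f := fun z => Real.exp (-(b - z) ^ 2 / (z - a))) (x := min x b)
      (ContDiffAt.exp (ContDiffAt.div (by fun_prop) (by fun_prop) (by exact (sub_pos.2 hmin).ne')))
    have hmin_lip : LipschitzWith 1 (fun y : ℝ => min y b) := LipschitzWith.id.min_const b
    exact ⟨K * 1, _, hmin_lip.continuous.continuousAt.preimage_mem_nhds ht,
      hF.comp hmin_lip.lipschitzOnWith (mapsTo_preimage _ _)⟩

end psiStep

section penalty

variable {ε M θ : ℝ}

theorem penalty_locallyLipschitz (hε : 0 < ε) : LocallyLipschitz (penalty ε M) := by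
  have hG : ContDiff ℝ 1 fun p : ℝ × ℝ × ℝ =>
      (1 - p.2.1) * (p.1 - ε) ^ 2 + p.2.2 * (p.1 - M + ε) ^ 2 := by fun_prop
  exact hG.locallyLipschitz.comp (LocallyLipschitz.id.prodMk
    ((psiStep_locallyLipschitz hε).prodMk (psiStep_locallyLipschitz (by linarith))))

theorem penalty_eq_zero (hε : 0 < ε) (h₁ : ε < θ) (h₂ : θ ≤ M - ε) : penalty ε M θ = 0 := by
  rw [penalty, psiStep_of_lt hε.le h₁, psiStep_of_le h₂]
  ring

theorem penalty_of_nonpos (h₁ : θ ≤ 0) (h₂ : θ ≤ M - ε) : penalty ε M θ = (θ - ε) ^ 2 := by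
  rw [penalty, psiStep_of_le h₁, psiStep_of_le h₂]
  ring

theorem penalty_of_lt (hε : 0 ≤ ε) (h₁ : ε < θ) (h₂ : M < θ) :
    penalty ε M θ = (θ - (M - ε)) ^ 2 := by
  rw [penalty, psiStep_of_lt hε h₁, psiStep_of_lt (by linarith) h₂]
  ring

theorem abs_penalty_sub_le_of_tail {θstar e : ℝ} (hε : 0 ≤ ε)
    (hθstar : ε < θstar ∧ θstar < M - ε) (he : 0 ≤ e) (h : θ + e ≤ 0 ∨ M < θ - e) :
    |penalty ε M (θ + e) - penalty ε M (θ - e)| ≤ 4 * |θ - θstar| * e := by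
  have hquad (c : ℝ) (hc : |θ - c| ≤ |θ - θstar|) :
      |(θ + e - c) ^ 2 - (θ - e - c) ^ 2| ≤ 4 * |θ - θstar| * e := by
    rw [show (θ + e - c) ^ 2 - (θ - e - c) ^ 2 = 4 * (θ - c) * e by ring, abs_mul, abs_mul,
      abs_of_nonneg he]
    gcongr
    norm_num
  obtain ⟨h₁, h₂⟩ := hθstar
  rcases h with h | h
  · rw [penalty_of_nonpos h (by linarith), penalty_of_nonpos (by linarith) (by linarith)]
    exact hquad ε (by rw [abs_of_nonpos, abs_of_neg] <;> linarith)
  · rw [penalty_of_lt hε (by linarith) (by linarith), penalty_of_lt hε (by linarith) h]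
    exact hquad (M - ε) (by rw [abs_of_pos, abs_of_pos] <;> linarith)

end penalty

theorem penalty_symmetric_difference_bound_general
    (ε M θstar : ℝ) (hε : 0 < ε)
    (hθstar : ε < θstar ∧ θstar < M - ε) :
    ∃ C₂ : ℝ, 0 < C₂ ∧ ∃ ε₀ : ℝ, 0 < ε₀ ∧
      ∀ θ e : ℝ, 0 < e → e < ε₀ →
        |penalty ε M (θ + e) - penalty ε M (θ - e)| ≤ C₂ * |θ - θstar| * e := by
  set d := min (θstar - ε) (M - ε - θstar)
  have hd₁ : d ≤ θstar - ε := min_le_left _ _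
  have hd₂ : d ≤ M - ε - θstar := min_le_right _ _
  have hd : 0 < d := lt_min (by linarith [hθstar.1]) (by linarith [hθstar.2])
  obtain ⟨K, hK⟩ := (penalty_locallyLipschitz (M := M) hε).locallyLipschitzOn
    |>.exists_lipschitzOnWith_of_compact (isCompact_Icc (a := -2) (b := M + 2))
  refine ⟨4 + 4 * K / d, by positivity, min 1 (d / 2), by positivity, fun θ e he he₀ => ?_⟩
  have he₁ : e < 1 := he₀.trans_le (min_le_left _ _)
  have hed : e < d / 2 := he₀.trans_le (min_le_right _ _)
  by_cases htail : θ + e ≤ 0 ∨ M < θ - e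
  · refine (abs_penalty_sub_le_of_tail hε.le hθstar he.le htail).trans ?_
    gcongr
    exact le_add_of_nonneg_right (by positivity)
  rw [not_or, not_le, not_lt] at htail
  obtain hnear | hfar := lt_or_ge |θ - θstar| (d / 2)
  · obtain ⟨h₁, h₂⟩ := abs_lt.mp hnear
    rw [penalty_eq_zero hε (by linarith) (by linarith),
      penalty_eq_zero hε (by linarith) (by linarith), sub_zero, abs_zero]
    positivity
  calc _ ≤ 2 * K * e := hK.abs_sub_le_two_mul he.le ⟨by linarith, by linarith⟩
          ⟨by linarith, by linarith⟩
    _ ≤ 4 * K / d * |θ - θstar| * e := by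
        rw [div_mul_eq_mul_div, div_mul_eq_mul_div, le_div_iff₀ hd]
        nlinarith [mul_le_mul_of_nonneg_left hfar (by positivity : (0 : ℝ) ≤ 4 * K * e)]
    _ ≤ _ := by gcongr; linarith

/-- Symmetric-difference regularity bound on the penalty function (Assumption 1.c of
the paper): there are `C₂ > 0` and `ε₀ > 0` such that
`|b(θ + e) − b(θ − e)| ≤ C₂ |θ − θ*| e` for all `θ` and all `0 < e < ε₀`. -/
theorem penalty_symmetric_difference_bound
    (ε M θstar : ℝ) (hε : 0 < ε) (hM : 2 * ε < M)
    (hθstar : ε < θstar ∧ θstar < M - ε) :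
    ∃ C₂ : ℝ, 0 < C₂ ∧ ∃ ε₀ : ℝ, 0 < ε₀ ∧
      ∀ θ e : ℝ, 0 < e → e < ε₀ →
        |penalty ε M (θ + e) - penalty ε M (θ - e)| ≤ C₂ * |θ - θstar| * e :=
  penalty_symmetric_difference_bound_general ε M θstar hε hθstar
end

section
/- Let f : ℝ → ℝ be continuously differentiable and suppose f′ has a unique zero θ* ∈ ℝ. Let φ : [0, ∞) → ℝ be differentiable and bounded, and suppose φ′(t) = −f′(φ(t)) for all t ≥ 0. Then φ(t) → θ* as t → ∞. -/
open Filter Set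

/-! In one dimension the flow `φ′ = −g(φ)` can be trapped by levels: if `g c > 0` the trajectory
cannot cross `c` upwards, and if `g c < 0` it cannot cross `c` downwards. On a compact interval
without zeros of `g` the speed `|g|` is bounded below, so the trajectory leaves that interval in
finite time. For `c > θ*` both facts together push a trajectory bounded by `B` below `c`
eventually: either it leaves `[c, B]` downwards and the level `c` traps it, or it never reaches
`c` at all, since once above `c` it would be trapped in `[c, B]`. Reflecting gives the lower
bound. -/

theorem le_of_deriv_neg_at_level {φ φ' : ℝ → ℝ} {a c : ℝ}
    (hφ : ∀ t, a ≤ t → HasDerivAt φ (φ' t) t) (ha : φ a ≤ c)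
    (hc : ∀ t, a ≤ t → φ t = c → φ' t < 0) : ∀ t, a ≤ t → φ t ≤ c := fun _ ht =>
  image_le_of_deriv_right_lt_deriv_boundary' (B := fun _ => c) (B' := 0)
    (fun s hs => (hφ s hs.1).continuousAt.continuousWithinAt)
    (fun s hs => (hφ s hs.1).hasDerivWithinAt) ha continuousOn_const
    (fun _ _ => hasDerivWithinAt_const _ _ _) (fun s hs => hc s hs.1) (right_mem_Icc.2 ht)

theorem exists_notMem_Icc_of_hasDerivAt_neg_comp {g φ : ℝ → ℝ} {a c d : ℝ}
    (hg : ContinuousOn g (Icc c d)) (hz : ∀ x ∈ Icc c d, g x ≠ 0)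
    (hφ : ∀ t, a ≤ t → HasDerivAt φ (-g (φ t)) t) :
    ∃ t, a ≤ t ∧ φ t ∉ Icc c d := by
  by_contra! hstay
  obtain ⟨δ, hδ, hδg⟩ := isCompact_Icc.exists_forall_le' hg.abs (a := 0)
    fun x hx => abs_pos.2 (hz x hx)
  have hcd : 0 ≤ d - c := sub_nonneg.2 ((hstay a le_rfl).1.trans (hstay a le_rfl).2)
  set b := a + (d - c) / δ + 1
  have hab : a < b := by have := div_nonneg hcd hδ.le; linarith
  obtain ⟨ξ, hξ, hslope⟩ := exists_hasDerivAt_eq_slope φ (fun t => -g (φ t)) hab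
    (fun t ht => (hφ t ht.1).continuousAt.continuousWithinAt) (fun t ht => hφ t ht.1.le)
  have hdisp : φ b - φ a = -g (φ ξ) * (b - a) := by
    rw [hslope, div_mul_cancel₀ _ (sub_ne_zero.2 hab.ne')]
  have hfar : d - c < |φ b - φ a| :=
    calc d - c < δ * (b - a) := by simp only [b]; field_simp; linarith
      _ ≤ |g (φ ξ)| * (b - a) := by gcongr; exact hδg _ (hstay ξ hξ.1.le)
      _ = |φ b - φ a| := by rw [hdisp, abs_mul, abs_neg, abs_of_pos (sub_pos.2 hab)]
  exact hfar.not_ge (Real.dist_le_of_mem_Icc (hstay b hab.le) (hstay a le_rfl))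

theorem eventually_le_of_hasDerivAt_neg_comp {g φ : ℝ → ℝ} {a B c : ℝ}
    (hg : Continuous g) (hz : ∀ x, c ≤ x → g x ≠ 0)
    (hφ : ∀ t, a ≤ t → HasDerivAt φ (-g (φ t)) t) (hB : ∀ t, a ≤ t → φ t ≤ B) :
    ∀ᶠ t in atTop, φ t ≤ c := by
  have hleave : ∀ t₀, a ≤ t₀ → ∃ t, t₀ ≤ t ∧ φ t < c := fun t₀ ht₀ => by
    obtain ⟨t, ht, hout⟩ := exists_notMem_Icc_of_hasDerivAt_neg_comp (d := B) hg.continuousOn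
      (fun x hx => hz x hx.1) fun t ht => hφ t (ht₀.trans ht)
    exact ⟨t, ht, lt_of_not_ge fun hct => hout ⟨hct, hB t (ht₀.trans ht)⟩⟩
  rcases (hz c le_rfl).lt_or_gt with hneg | hpos
  · refine eventually_atTop.2 ⟨a, fun t ht => le_of_not_ge fun hct => ?_⟩
    obtain ⟨s, hs, hsc⟩ := hleave t ht
    have hstay := le_of_deriv_neg_at_level (φ := fun s => -φ s) (φ' := fun s => g (φ s))
      (fun s hs => (hφ s (ht.trans hs)).neg.congr_deriv (neg_neg _)) (neg_le_neg hct)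
      (fun s _ hsc => by rwa [neg_inj.1 hsc]) s hs
    linarith
  · obtain ⟨t₁, ht₁, hφt₁⟩ := hleave a le_rfl
    exact eventually_atTop.2 ⟨t₁, le_of_deriv_neg_at_level (fun t ht => hφ t (ht₁.trans ht))
      hφt₁.le fun t _ htc => by rw [htc]; linarith⟩

theorem gradient_flow_converges_to_unique_critical_point_general
    (f' : ℝ → ℝ)
    (hcont : Continuous f')
    (θstar : ℝ)
    (huniq : ∀ θ, f' θ = 0 → θ = θstar)
    (φ : ℝ → ℝ)
    (hφ : ∀ t : ℝ, 0 ≤ t → HasDerivAt φ (-f' (φ t)) t)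
    (hbdd : ∃ B : ℝ, ∀ t : ℝ, 0 ≤ t → |φ t| ≤ B) :
    Tendsto φ atTop (nhds θstar) := by
  obtain ⟨B, hB⟩ := hbdd
  refine tendsto_order.2 ⟨fun l hl => ?_, fun u hu => ?_⟩
  · obtain ⟨c, hlc, hcθ⟩ := exists_between hl
    have hbelow := eventually_le_of_hasDerivAt_neg_comp (g := fun x => -f' (-x))
      (φ := fun t => -φ t) (B := B) (c := -c) (hcont.comp continuous_neg).neg
      (fun x hx h0 => by linarith [huniq _ (neg_eq_zero.1 h0)])
      (fun t ht => (hφ t ht).neg.congr_deriv (by simp)) fun t ht => neg_le.1 (abs_le.1 (hB t ht)).1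
    filter_upwards [hbelow] with t ht
    linarith
  · obtain ⟨c, hθc, hcu⟩ := exists_between hu
    filter_upwards [eventually_le_of_hasDerivAt_neg_comp hcont
      (fun x hx h0 => by linarith [huniq x h0]) hφ fun t ht => (abs_le.1 (hB t ht)).2] with t ht
    linarith

/-- A bounded trajectory of the gradient flow `φ′ = −f′(φ)` of a continuously
differentiable function `f` whose derivative has a unique zero `θ*` converges
to `θ*`. -/
theorem gradient_flow_converges_to_unique_critical_point
    (f f' : ℝ → ℝ)
    (hderiv : ∀ x, HasDerivAt f (f' x) x)
    (hcont : Continuous f')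
    (θstar : ℝ) (hzero : f' θstar = 0)
    (huniq : ∀ θ, f' θ = 0 → θ = θstar)
    (φ : ℝ → ℝ)
    (hφ : ∀ t : ℝ, 0 ≤ t → HasDerivAt φ (-f' (φ t)) t)
    (hbdd : ∃ B : ℝ, ∀ t : ℝ, 0 ≤ t → |φ t| ≤ B) :
    Tendsto φ atTop (nhds θstar) :=
  gradient_flow_converges_to_unique_critical_point_general f' hcont θstar huniq φ hφ hbdd
end
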